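/- arXiv:1908.10691 — 5 statements merged into one kernel-verified Lean document; each statement's English description precedes it below -/
import Mathlib

section
/- Let d ≥ 2 and let P be a stationary and ergodic probability measure on (Ω,F). Let L²_{∇*} be the closure of {D^*ζ : ζ ∈ L^∞(Ω,ℝ)} in L²(Ω,ℝ^d), let f ∈ L²(Ω,ℝ^d), and let ξ be the orthogonal projection of f onto L²_{∇*}. Then there exists a unique family (u_ε)_{ε∈(0,1)} ⊆ L²(Ω,ℝ) and there exists a sequence (ε_n)_{n∈ℕ} ⊆ (0,1) such that for every ε ∈ (0,1) one has (ε + D·D^*) u_ε = D·f in L²(Ω,ℝ), and such that for every G ∈ L²(Ω,ℝ^d), lim_{n→∞} E_P[D^* u_{ε_n} · G] = E_P[ξ · G]. -/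
open MeasureTheory Filter
open scoped ENNReal Classical

noncomputable section

/-- Points of the lattice `ℤ^d`. -/
abbrev Zd (d : ℕ) := Fin d → ℤ

/-- The `i`-th standard unit vector of `ℤ^d`. -/
def unitVec {d : ℕ} (i : Fin d) : Zd d := fun j => if j = i then 1 else 0

/-- Environments: a positive conductance for every (unoriented nearest-neighbour) edge,
where the edge `{x, x + e i}` is encoded by the pair `(x, i)`. -/
abbrev Env (d : ℕ) := ((Fin d → ℤ) × Fin d) → {r : ℝ // 0 < r}

/-- The conductance of the edge `{x, x + e i}` in the environment `ω`, as a real number. -/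
def cval {d : ℕ} (ω : Env d) (x : Zd d) (i : Fin d) : ℝ := (ω (x, i)).1

/-- Nearest-neighbour adjacency on `ℤ^d`. -/
def Adj {d : ℕ} (x y : Zd d) : Prop :=
  ∃ i : Fin d, y = x + unitVec i ∨ x = y + unitVec i

/-- The conductance `ω_{xy}` between two nearest neighbours `x ∼ y` (and `0` otherwise). -/
def econd {d : ℕ} (ω : Env d) (x y : Zd d) : ℝ :=
  ∑ i : Fin d, ((if y = x + unitVec i then cval ω x i else 0)
    + (if x = y + unitVec i then cval ω y i else 0))

/-- Discrete gradient `(∇_i u)(x) = u(x+e_i) - u(x)`. -/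
def dGrad {d : ℕ} (i : Fin d) (f : Zd d → ℝ) (x : Zd d) : ℝ :=
  f (x + unitVec i) - f x

/-- Discrete backward gradient `(∇_i^* u)(x) = u(x-e_i) - u(x)`. -/
def dGradStar {d : ℕ} (i : Fin d) (f : Zd d → ℝ) (x : Zd d) : ℝ :=
  f (x - unitVec i) - f x

/-- Discrete divergence `(∇^* ⬝ F)(x) = ∑ i, (F_i(x-e_i) - F_i(x))`. -/
def divStar {d : ℕ} (F : Zd d → Fin d → ℝ) (x : Zd d) : ℝ :=
  ∑ i : Fin d, (F (x - unitVec i) i - F x i)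

/-- Discrete Laplacian `Δu = -∑ i, ∇_i^* ∇_i u`. -/
def lap {d : ℕ} (f : Zd d → ℝ) (x : Zd d) : ℝ :=
  - ∑ i : Fin d, dGradStar i (dGrad i f) x

/-- The open discrete box `D_R = {x : |x|_∞ < R}`. -/
def boxD (d R : ℕ) : Finset (Zd d) :=
  Fintype.piFinset fun _ => Finset.Ioo (-(R : ℤ)) (R : ℤ)

/-- The closed discrete box `D̄_R = {x : |x|_∞ ≤ R}`. -/
def boxC (d R : ℕ) : Finset (Zd d) :=
  Fintype.piFinset fun _ => Finset.Icc (-(R : ℤ)) (R : ℤ)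

/-- The discrete boundary `∂D_R = {x : |x|_∞ = R}`. -/
def bdry (d R : ℕ) : Finset (Zd d) := boxC d R \ boxD d R

/-- The reduced boundary `∂̃D_R` of points of `∂D_R` having a neighbour in `D_R`. -/
def tbdry (d R : ℕ) : Finset (Zd d) :=
  (bdry d R).filter fun x => ∃ y ∈ boxD d R, Adj x y

/-- The oriented edge set `E_R = {(x,y) : x ∼ y, |x+y|_∞ < 2R}`. -/
def ER (d R : ℕ) : Finset (Zd d × Zd d) :=
  ((boxC d R) ×ˢ (boxC d R)).filter fun e =>
    Adj e.1 e.2 ∧ ∀ i, |e.1 i + e.2 i| < 2 * (R : ℤ)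

/-- The normal edges `E_R^{nor} = {(x,y) : x ∈ D_R, y ∈ ∂D_R, x ∼ y}`. -/
def Enor (d R : ℕ) : Finset (Zd d × Zd d) :=
  ((boxD d R) ×ˢ (bdry d R)).filter fun e => Adj e.1 e.2

/-- The tangential edges `E_R^{tan} = {(x,y) : x, y ∈ ∂D_R, x ∼ y}`. -/
def Etan (d R : ℕ) : Finset (Zd d × Zd d) :=
  ((bdry d R) ×ˢ (bdry d R)).filter fun e => Adj e.1 e.2

/-- Normalized `ℓ^r` norm `⦀u⦀_{r,A}` on a finite set. -/
def avNorm {V : Type*} (r : ℝ) (A : Finset V) (u : V → ℝ) : ℝ :=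
  ((∑ x ∈ A, |u x| ^ r) / (A.card : ℝ)) ^ (1 / r)

/-- Sup norm `⦀u⦀_{∞,A}` on a finite set. -/
def supNorm {V : Type*} (A : Finset V) (u : V → ℝ) : ℝ :=
  ⨆ x ∈ A, |u x|

/-- Normalized `ℓ^r` norm for an extended exponent `r ∈ [1,∞]`. -/
def avNormE {V : Type*} (r : ℝ≥0∞) (A : Finset V) (u : V → ℝ) : ℝ :=
  if r = ∞ then supNorm A u else avNorm r.toReal A u

/-- The exponent `2p/(p-1)`, with the convention that it equals `2` for `p = ∞`. -/
def dualExp (p : ℝ≥0∞) : ℝ :=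
  if p = ∞ then 2 else 2 * p.toReal / (p.toReal - 1)

/-- The exponent `2p/(p+1)`, with the convention that it equals `2` for `p = ∞`. -/
def coExp (p : ℝ≥0∞) : ℝ :=
  if p = ∞ then 2 else 2 * p.toReal / (p.toReal + 1)

/-- Euclidean norm on `ℝ^d`. -/
def vecNorm {d : ℕ} (v : Fin d → ℝ) : ℝ := Real.sqrt (∑ i, v i ^ 2)

/-- The translation `τ_a` acting on environments. -/
def shiftEnv {d : ℕ} (a : Zd d) (ω : Env d) : Env d := fun e => ω (e.1 + a, e.2)

/-- Stationarity of a measure on environments. -/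
def Stationary {d : ℕ} (P : Measure (Env d)) : Prop :=
  ∀ a : Zd d, MeasurePreserving (shiftEnv a) P P

/-- Ergodicity of a measure on environments w.r.t. the translations. -/
def ErgodicEnv {d : ℕ} (P : Measure (Env d)) : Prop :=
  ∀ A : Set (Env d), MeasurableSet A → (∀ a : Zd d, shiftEnv a ⁻¹' A = A) →
    P A = 0 ∨ P A = 1

/-- Stationary (`Stat_P`) random fields. -/
def StatP {d : ℕ} {E : Type*} [MeasurableSpace E] (P : Measure (Env d))
    (f : Env d → Zd d → E) : Prop :=
  Measurable (Function.uncurry f) ∧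
    ∀ᵐ ω ∂P, ∀ x : Zd d, f ω x = f (shiftEnv x ω) 0

/-- The horizontal derivative `D_i` on functions of the environment. -/
def Dop {d : ℕ} (i : Fin d) (ζ : Env d → ℝ) : Env d → ℝ :=
  fun ω => ζ (shiftEnv (unitVec i) ω) - ζ ω

/-- The horizontal derivative `D_i^*` on functions of the environment. -/
def DopStar {d : ℕ} (i : Fin d) (ζ : Env d → ℝ) : Env d → ℝ :=
  fun ω => ζ (shiftEnv (-(unitVec i)) ω) - ζ ω

/-- The reflection of `ℤ^d` flipping the `j`-th coordinate. -/
def reflPt {d : ℕ} (j : Fin d) (x : Zd d) : Zd d := fun k => if k = j then -x k else x k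

/-- The reflection `ρ_j` acting on environments. -/
def reflEnv {d : ℕ} (j : Fin d) (ω : Env d) : Env d :=
  fun e => ω (if e.2 = j then reflPt j e.1 - unitVec j else reflPt j e.1, e.2)

/-- `ζ` is (essentially) bounded and measurable, i.e. `ζ ∈ L^∞(Ω,ℝ)`. -/
def BddMeas {d : ℕ} (P : Measure (Env d)) (ζ : Env d → ℝ) : Prop :=
  Measurable ζ ∧ ∃ C : ℝ, ∀ᵐ ω ∂P, |ζ ω| ≤ C

/-!
With `T = D^* : L²(P) → L²(P, ℝ^d)`, stationarity makes the translations unitary on `L²(P)`,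
so `T† = D·` and `(ε + D·D^*) u = D·f` is the Tikhonov-regularized normal equation
`ε u + T† T u = T† f`, uniquely solvable by Lax–Milgram. Testing it against `u_ε - w` and using
`f - ξ ⊥ range T` gives `‖T u_ε - ξ‖² ≤ ε ‖w‖² + ‖T w - ξ‖²`; since `ξ` lies in the closure of
`range T`, `D^* u_ε → ξ` even strongly in `L²` as `ε → 0⁺`.
-/
open scoped InnerProduct RealInnerProductSpace Topology

namespace ContinuousLinearMap

variable {H E : Type*} [NormedAddCommGroup H] [InnerProductSpace ℝ H] [CompleteSpace H]
  [NormedAddCommGroup E] [InnerProductSpace ℝ E] [CompleteSpace E] (T : H →L[ℝ] E)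

theorem isCoercive_inner_smul_add_adjoint_comp_self {ε : ℝ} (hε : 0 < ε) :
    IsCoercive ((innerSL ℝ).comp (ε • 1 + T† ∘L T)) := by
  refine ⟨ε, hε, fun u => ?_⟩
  have : ⟪(ε • 1 + T† ∘L T) u, u⟫ = ε * ‖u‖ ^ 2 + ‖T u‖ ^ 2 := by
    simp [inner_add_left, real_inner_smul_left, adjoint_inner_left]
  simp only [coe_comp, Function.comp_apply, innerSL_apply_apply, this]
  nlinarith [sq_nonneg ‖T u‖]

/-- Tikhonov regularization: the solution of `ε u + T† T u = T† F`, with junk value `0`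
for `ε ≤ 0`. -/
def tikhonov (F : E) (ε : ℝ) : H :=
  if hε : 0 < ε then
    (T.isCoercive_inner_smul_add_adjoint_comp_self hε).continuousLinearEquivOfBilin.symm ((T†) F)
  else 0

theorem eq_tikhonov_iff {F : E} {ε : ℝ} (hε : 0 < ε) {u : H} :
    u = T.tikhonov F ε ↔ ε • u + (T†) (T u) = (T†) F := by
  set e := (T.isCoercive_inner_smul_add_adjoint_comp_self hε).continuousLinearEquivOfBilin
  have he : ∀ v, e v = ε • v + (T†) (T v) := fun v => ext_inner_right ℝ fun w => by
    simp [e, inner_add_left, real_inner_smul_left]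
  rw [tikhonov, dif_pos hε, ContinuousLinearEquiv.eq_symm_apply, he]

theorem tikhonov_spec (F : E) {ε : ℝ} (hε : 0 < ε) :
    ε • T.tikhonov F ε + (T†) (T (T.tikhonov F ε)) = (T†) F :=
  (T.eq_tikhonov_iff hε).1 rfl

theorem inner_tikhonov_add (F : E) {ε : ℝ} (hε : 0 < ε) (v : H) :
    ε * ⟪T.tikhonov F ε, v⟫ + ⟪T (T.tikhonov F ε), T v⟫ = ⟪F, T v⟫ := by
  have := congrArg (⟪·, v⟫) (T.tikhonov_spec F hε)
  simpa only [inner_add_left, real_inner_smul_left, adjoint_inner_left] using this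

/-- Test the regularized equation against `u_ε - w`, then apply Young's inequality twice. -/
theorem norm_apply_tikhonov_sub_sq_le {F ξ : E} (hξ : ∀ v, ⟪F - ξ, T v⟫ = 0) {ε : ℝ}
    (hε : 0 < ε) (w : H) :
    ‖T (T.tikhonov F ε) - ξ‖ ^ 2 ≤ ε * ‖w‖ ^ 2 + ‖T w - ξ‖ ^ 2 := by
  set u := T.tikhonov F ε
  have key : ε * ⟪u, u - w⟫ + ⟪T u - ξ, (T u - ξ) - (T w - ξ)⟫ = 0 := by
    have h1 := T.inner_tikhonov_add F hε (u - w)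
    have h2 := hξ (u - w)
    rw [inner_sub_left] at h2
    rw [sub_sub_sub_cancel_right, ← map_sub, inner_sub_left]
    linarith
  rw [inner_sub_right, inner_sub_right, real_inner_self_eq_norm_sq,
    real_inner_self_eq_norm_sq] at key
  have h1 := real_inner_le_norm u w
  have h2 := real_inner_le_norm (T u - ξ) (T w - ξ)
  nlinarith [sq_nonneg (‖u‖ - ‖w‖ / 2), sq_nonneg (‖T u - ξ‖ - ‖T w - ξ‖), norm_nonneg w]

theorem tendsto_apply_tikhonov {F ξ : E} (hξK : ξ ∈ closure (Set.range T))
    (hξ : ∀ v, ⟪F - ξ, T v⟫ = 0) :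
    Tendsto (fun ε => T (T.tikhonov F ε)) (𝓝[>] 0) (𝓝 ξ) := by
  rw [Metric.tendsto_nhds]
  intro δ hδ
  obtain ⟨_, ⟨w, rfl⟩, hw⟩ := Metric.mem_closure_iff.1 hξK (δ / 2) (by positivity)
  rw [dist_comm, dist_eq_norm] at hw
  have hc : 0 < (δ / 2) ^ 2 / (‖w‖ ^ 2 + 1) := by positivity
  filter_upwards [Ioo_mem_nhdsGT hc] with ε ⟨hε, hεc⟩
  rw [dist_eq_norm]
  have hεw : ε * ‖w‖ ^ 2 ≤ (δ / 2) ^ 2 := by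
    rw [lt_div_iff₀ (by positivity)] at hεc
    nlinarith [sq_nonneg ‖w‖]
  have hb : ‖T w - ξ‖ ^ 2 < (δ / 2) ^ 2 := by gcongr
  have := T.norm_apply_tikhonov_sub_sq_le hξ hε w
  exact lt_of_pow_lt_pow_left₀ 2 hδ.le (by nlinarith)

end ContinuousLinearMap

namespace MeasureTheory

variable {α ι : Type*} [MeasurableSpace α] {μ : Measure α} [Fintype ι]

/-- `L²(μ, ℝ^ι)` is modelled as the Hilbert sum `PiLp 2 (fun _ : ι => L²(μ))`. -/
def MemLp.toPiLp {f : α → ι → ℝ} (hf : MemLp f 2 μ) : PiLp 2 fun _ : ι => Lp ℝ 2 μ :=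
  WithLp.toLp 2 fun i => (hf.eval i).toLp (f · i)

theorem MemLp.coeFn_toPiLp {f : α → ι → ℝ} (hf : MemLp f 2 μ) (i : ι) :
    ⇑(hf.toPiLp i) =ᵐ[μ] (f · i) :=
  (hf.eval i).coeFn_toLp

theorem integral_sum_mul_eq_inner {a b : α → ι → ℝ} {v w : PiLp 2 fun _ : ι => Lp ℝ 2 μ}
    (ha : ∀ i, ⇑(v i) =ᵐ[μ] (a · i)) (hb : ∀ i, ⇑(w i) =ᵐ[μ] (b · i)) :
    ∫ x, ∑ i, a x i * b x i ∂μ = ⟪v, w⟫ := by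
  have hab : ∀ i, (fun x => ⟪v i x, w i x⟫) =ᵐ[μ] fun x => a x i * b x i := fun i => by
    filter_upwards [ha i, hb i] with x hax hbx
    rw [hax, hbx, real_inner_eq_re_inner, RCLike.inner_apply, conj_trivial, mul_comm]
    rfl
  rw [integral_finsetSum _ fun i _ => (L2.integrable_inner (v i) (w i)).congr (hab i),
    PiLp.inner_apply]
  exact Finset.sum_congr rfl fun i _ => by rw [L2.inner_def, integral_congr_ae (hab i)]

theorem Lp.ext_on_bounded {p : ℝ≥0∞} [Fact (1 ≤ p)] (hp : p ≠ ∞) {F : Type*}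
    [TopologicalSpace F] [T2Space F] {φ ψ : Lp ℝ p μ → F} (hφ : Continuous φ)
    (hψ : Continuous ψ)
    (h : ∀ g : α → ℝ, Measurable g → (∃ C, ∀ x, |g x| ≤ C) →
      ∀ hg : MemLp g p μ, φ (hg.toLp g) = ψ (hg.toLp g)) :
    φ = ψ := by
  refine (Lp.simpleFunc.denseRange hp).equalizer hφ hψ (funext fun s => ?_)
  obtain ⟨C, hC⟩ := ((Lp.simpleFunc.toSimpleFunc s).map (|·|)).exists_forall_le
  have hs : (Lp.simpleFunc.memLp s).toLp _ = (s : Lp ℝ p μ) :=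
    Lp.ext ((Lp.simpleFunc.memLp s).coeFn_toLp.trans (Lp.simpleFunc.toSimpleFunc_eq_toFun s))
  simpa only [Function.comp_apply, hs] using
    h _ (Lp.simpleFunc.toSimpleFunc s).measurable ⟨C, hC⟩ (Lp.simpleFunc.memLp s)

end MeasureTheory

theorem BddMeas.memLp {d : ℕ} {P : Measure (Env d)} [IsFiniteMeasure P] {ζ : Env d → ℝ}
    (h : BddMeas P ζ) (p : ℝ≥0∞) : MemLp ζ p P := by
  obtain ⟨hζ, C, hC⟩ := h
  exact MemLp.of_bound hζ.aestronglyMeasurable C (by simpa only [Real.norm_eq_abs] using hC)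

theorem shiftEnv_shiftEnv {d : ℕ} (a b : Zd d) (ω : Env d) :
    shiftEnv a (shiftEnv b ω) = shiftEnv (a + b) ω := by
  funext e
  simp [shiftEnv, add_assoc]

namespace Stationary

variable {d : ℕ} {P : Measure (Env d)} (hstat : Stationary P)

def shiftL2 (a : Zd d) : Lp ℝ 2 P →ₗᵢ[ℝ] Lp ℝ 2 P :=
  Lp.compMeasurePreservingₗᵢ ℝ (shiftEnv a) (hstat a)

theorem coeFn_shiftL2 (a : Zd d) (u : Lp ℝ 2 P) :
    ⇑(hstat.shiftL2 a u) =ᵐ[P] u ∘ shiftEnv a :=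
  Lp.coeFn_compMeasurePreserving u (hstat a)

theorem shiftL2_shiftL2_neg (a : Zd d) (u : Lp ℝ 2 P) :
    hstat.shiftL2 a (hstat.shiftL2 (-a) u) = u := by
  refine Lp.ext ((hstat.coeFn_shiftL2 a _).trans ?_)
  filter_upwards [(hstat a).quasiMeasurePreserving.ae_eq (hstat.coeFn_shiftL2 (-a) u)]
    with ω hω
  simp only [Function.comp_apply] at hω ⊢
  rw [hω, shiftEnv_shiftEnv, neg_add_cancel]
  congr 1
  funext e
  simp [shiftEnv]

theorem inner_shiftL2_left (a : Zd d) (u v : Lp ℝ 2 P) :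
    ⟪hstat.shiftL2 a u, v⟫ = ⟪u, hstat.shiftL2 (-a) v⟫ := by
  conv_lhs => rw [← hstat.shiftL2_shiftL2_neg a v]
  exact (hstat.shiftL2 a).inner_map_map u _

def diffL2 (a : Zd d) : Lp ℝ 2 P →L[ℝ] Lp ℝ 2 P :=
  (hstat.shiftL2 a).toContinuousLinearMap - 1

theorem inner_diffL2_left (a : Zd d) (u v : Lp ℝ 2 P) :
    ⟪hstat.diffL2 a u, v⟫ = ⟪u, hstat.diffL2 (-a) v⟫ := by
  simp only [diffL2, sub_apply, one_apply_eq_self,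
    LinearIsometry.coe_toContinuousLinearMap, inner_sub_left, inner_sub_right,
    inner_shiftL2_left]

theorem coeFn_diffL2 (a : Zd d) {u : Lp ℝ 2 P} {g : Env d → ℝ} (hg : ⇑u =ᵐ[P] g) :
    ⇑(hstat.diffL2 a u) =ᵐ[P] fun ω => g (shiftEnv a ω) - g ω := by
  filter_upwards [Lp.coeFn_sub (hstat.shiftL2 a u) u, hstat.coeFn_shiftL2 a u,
    (hstat a).quasiMeasurePreserving.ae_eq hg, hg] with ω h₁ h₂ h₃ h₄
  simp_all [diffL2]

def gradStarL2 : Lp ℝ 2 P →L[ℝ] PiLp 2 fun _ : Fin d => Lp ℝ 2 P :=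
  (PiLp.continuousLinearEquiv 2 ℝ _).symm.toContinuousLinearMap.comp
    (ContinuousLinearMap.pi fun i => hstat.diffL2 (-unitVec i))

theorem gradStarL2_apply (u : Lp ℝ 2 P) (i : Fin d) :
    hstat.gradStarL2 u i = hstat.diffL2 (-unitVec i) u :=
  rfl

theorem adjoint_gradStarL2_apply (v : PiLp 2 fun _ : Fin d => Lp ℝ 2 P) :
    (hstat.gradStarL2†) v = ∑ i, hstat.diffL2 (unitVec i) (v i) := by
  refine ext_inner_left ℝ fun u => ?_
  simp only [ContinuousLinearMap.adjoint_inner_right, PiLp.inner_apply, gradStarL2_apply,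
    inner_diffL2_left, neg_neg, inner_sum]

theorem coeFn_gradStarL2 {u : Lp ℝ 2 P} {g : Env d → ℝ} (hg : ⇑u =ᵐ[P] g) (i : Fin d) :
    ⇑(hstat.gradStarL2 u i) =ᵐ[P] DopStar i g :=
  hstat.coeFn_diffL2 _ hg

theorem coeFn_adjoint_gradStarL2 {v : PiLp 2 fun _ : Fin d => Lp ℝ 2 P}
    {F : Env d → Fin d → ℝ} (hF : ∀ i, ⇑(v i) =ᵐ[P] (F · i)) :
    ⇑((hstat.gradStarL2†) v) =ᵐ[P] fun ω => ∑ i, Dop i (F · i) ω := by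
  rw [adjoint_gradStarL2_apply]
  filter_upwards [Lp.coeFn_finsetSum Finset.univ fun i => hstat.diffL2 (unitVec i) (v i),
    ae_all_iff.2 fun i => hstat.coeFn_diffL2 (unitVec i) (hF i)] with ω hsum hD
  rw [hsum, Finset.sum_apply]
  exact Finset.sum_congr rfl fun i _ => hD i

theorem coeFn_smul_add_adjoint_gradStarL2_gradStarL2 (ε : ℝ) {u : Lp ℝ 2 P}
    {g : Env d → ℝ} (hg : ⇑u =ᵐ[P] g) :
    ⇑(ε • u + (hstat.gradStarL2†) (hstat.gradStarL2 u))
      =ᵐ[P] fun ω => ε * g ω + ∑ i, Dop i (DopStar i g) ω := by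
  filter_upwards [Lp.coeFn_add (ε • u) ((hstat.gradStarL2†) (hstat.gradStarL2 u)),
    Lp.coeFn_smul ε u, hg,
    hstat.coeFn_adjoint_gradStarL2 (F := fun ω i => DopStar i g ω) (hstat.coeFn_gradStarL2 hg)]
    with ω h₁ h₂ h₃ h₄
  simp only [h₁, Pi.add_apply, h₂, Pi.smul_apply, smul_eq_mul, h₃, h₄]

theorem ae_resolvent_eq_iff {f : Env d → Fin d → ℝ} (hf : MemLp f 2 P) {g : Env d → ℝ}
    (hg : MemLp g 2 P) (ε : ℝ) :
    (∀ᵐ ω ∂P, ε * g ω + ∑ i, Dop i (DopStar i g) ω = ∑ i, Dop i (fun ω' => f ω' i) ω) ↔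
      ε • hg.toLp g + (hstat.gradStarL2†) (hstat.gradStarL2 (hg.toLp g))
        = (hstat.gradStarL2†) hf.toPiLp := by
  rw [Lp.ext_iff]
  have hlhs := hstat.coeFn_smul_add_adjoint_gradStarL2_gradStarL2 ε hg.coeFn_toLp
  have hrhs := hstat.coeFn_adjoint_gradStarL2 hf.coeFn_toPiLp
  exact ⟨fun h => hlhs.trans (EventuallyEq.trans h hrhs.symm),
    fun h => hlhs.symm.trans (h.trans hrhs)⟩

theorem mem_closure_range_gradStarL2 [IsFiniteMeasure P] {ξ : Env d → Fin d → ℝ}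
    (hξ : MemLp ξ 2 P)
    (hξmem : ∃ ζ : ℕ → Env d → ℝ, (∀ n, BddMeas P (ζ n)) ∧
      Tendsto (fun n => ∫ ω, ∑ i : Fin d, (DopStar i (ζ n) ω - ξ ω i) ^ 2 ∂P)
        atTop (𝓝 0)) :
    hξ.toPiLp ∈ closure (Set.range hstat.gradStarL2) := by
  obtain ⟨ζ, hζ, hlim⟩ := hξmem
  set ζL2 := fun n => ((hζ n).memLp 2).toLp (ζ n)
  have hnorm : ∀ n, ‖hstat.gradStarL2 (ζL2 n) - hξ.toPiLp‖ ^ 2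
      = ∫ ω, ∑ i : Fin d, (DopStar i (ζ n) ω - ξ ω i) ^ 2 ∂P := fun n => by
    have hcoe : ∀ i, ⇑((hstat.gradStarL2 (ζL2 n) - hξ.toPiLp) i)
        =ᵐ[P] fun ω => DopStar i (ζ n) ω - ξ ω i := fun i =>
      (Lp.coeFn_sub _ _).trans <|
        (hstat.coeFn_gradStarL2 ((hζ n).memLp 2).coeFn_toLp i).sub (hξ.coeFn_toPiLp i)
    simp_rw [← real_inner_self_eq_norm_sq, ← integral_sum_mul_eq_inner hcoe hcoe, sq]
  have hlim' : Tendsto (fun n => hstat.gradStarL2 (ζL2 n)) atTop (𝓝 hξ.toPiLp) := by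
    rw [tendsto_iff_norm_sub_tendsto_zero]
    simpa only [Real.sqrt_zero, Real.sqrt_sq (norm_nonneg _), ← hnorm] using hlim.sqrt
  exact mem_closure_of_tendsto hlim' (Eventually.of_forall fun n => ⟨ζL2 n, rfl⟩)

theorem inner_sub_gradStarL2_eq_zero [IsFiniteMeasure P] {f ξ : Env d → Fin d → ℝ}
    (hf : MemLp f 2 P) (hξ : MemLp ξ 2 P)
    (hξorth : ∀ ζ : Env d → ℝ, BddMeas P ζ →
      ∫ ω, ∑ i : Fin d, (f ω i - ξ ω i) * DopStar i ζ ω ∂P = 0)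
    (u : Lp ℝ 2 P) :
    ⟪hf.toPiLp - hξ.toPiLp, hstat.gradStarL2 u⟫ = 0 := by
  have hcont : Continuous fun u => ⟪hf.toPiLp - hξ.toPiLp, hstat.gradStarL2 u⟫ := by fun_prop
  refine congrFun (Lp.ext_on_bounded ENNReal.ofNat_ne_top hcont continuous_const
    fun g hgm ⟨C, hC⟩ hg => ?_) u
  have hcoe : ∀ i, ⇑((hf.toPiLp - hξ.toPiLp) i) =ᵐ[P] fun ω => f ω i - ξ ω i := fun i =>
    (Lp.coeFn_sub _ _).trans ((hf.coeFn_toPiLp i).sub (hξ.coeFn_toPiLp i))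
  rw [← integral_sum_mul_eq_inner hcoe (hstat.coeFn_gradStarL2 hg.coeFn_toLp)]
  exact hξorth g ⟨hgm, C, Eventually.of_forall hC⟩

end Stationary

theorem weak_convergence_general
    (d : ℕ)
    (P : Measure (Env d)) [IsProbabilityMeasure P]
    (hstat : Stationary P)
    (f : Env d → Fin d → ℝ) (hf : MemLp f 2 P)
    (ξ : Env d → Fin d → ℝ) (hξ2 : MemLp ξ 2 P)
    -- `ξ` belongs to the `L²`-closure of `{D^*ζ : ζ ∈ L^∞}`:
    (hξmem : ∃ ζ : ℕ → Env d → ℝ, (∀ n, BddMeas P (ζ n)) ∧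
      Tendsto (fun n => ∫ ω, ∑ i : Fin d, (DopStar i (ζ n) ω - ξ ω i) ^ 2 ∂P)
        atTop (nhds 0))
    -- `f - ξ` is orthogonal to that subspace:
    (hξorth : ∀ ζ : Env d → ℝ, BddMeas P ζ →
      ∫ ω, ∑ i : Fin d, (f ω i - ξ ω i) * DopStar i ζ ω ∂P = 0) :
    ∃ u : ℝ → Env d → ℝ,
      (∀ ε ∈ Set.Ioo (0 : ℝ) 1, Measurable (u ε) ∧ MemLp (u ε) 2 P ∧
        ∀ᵐ ω ∂P,
          ε * u ε ω + ∑ i : Fin d, Dop i (DopStar i (u ε)) ω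
            = ∑ i : Fin d, Dop i (fun ω' => f ω' i) ω) ∧
      (∀ u' : ℝ → Env d → ℝ,
        (∀ ε ∈ Set.Ioo (0 : ℝ) 1, Measurable (u' ε) ∧ MemLp (u' ε) 2 P ∧
          ∀ᵐ ω ∂P,
            ε * u' ε ω + ∑ i : Fin d, Dop i (DopStar i (u' ε)) ω
              = ∑ i : Fin d, Dop i (fun ω' => f ω' i) ω) →
        ∀ ε ∈ Set.Ioo (0 : ℝ) 1, u' ε =ᵐ[P] u ε) ∧
      (∃ εs : ℕ → ℝ, (∀ n, εs n ∈ Set.Ioo (0 : ℝ) 1) ∧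
        ∀ G : Env d → Fin d → ℝ, Measurable G → MemLp G 2 P →
          Tendsto (fun n => ∫ ω, ∑ i : Fin d, DopStar i (u (εs n)) ω * G ω i ∂P)
            atTop (nhds (∫ ω, ∑ i : Fin d, ξ ω i * G ω i ∂P))) := by
  set u := hstat.gradStarL2.tikhonov hf.toPiLp
  have hsol : ∀ ε ∈ Set.Ioo (0 : ℝ) 1, ∀ g (hg : MemLp g 2 P),
      (∀ᵐ ω ∂P, ε * g ω + ∑ i, Dop i (DopStar i g) ω = ∑ i, Dop i (fun ω' => f ω' i) ω) ↔
        hg.toLp g = u ε := fun ε hε g hg =>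
    (hstat.ae_resolvent_eq_iff hf hg ε).trans (hstat.gradStarL2.eq_tikhonov_iff hε.1).symm
  refine ⟨fun ε => u ε, fun ε hε => ⟨(Lp.stronglyMeasurable _).measurable, Lp.memLp _,
    (hsol ε hε _ (Lp.memLp _)).2 (Lp.toLp_coeFn _ _)⟩, fun u' hu' ε hε => ?_,
    fun n => ((n : ℝ) + 2)⁻¹, fun n => ⟨by positivity, inv_lt_one_of_one_lt₀ (by linarith)⟩,
    fun G _ hG => ?_⟩
  · obtain ⟨-, hg, heq⟩ := hu' ε hε
    show u' ε =ᵐ[P] u ε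
    rw [← (hsol ε hε _ hg).1 heq]
    exact hg.coeFn_toLp.symm
  · have hεs : Tendsto (fun n : ℕ => ((n : ℝ) + 2)⁻¹) atTop (𝓝[>] 0) :=
      tendsto_nhdsWithin_iff.2 ⟨(tendsto_atTop_add_const_right _ 2
        tendsto_natCast_atTop_atTop).inv_tendsto_atTop,
        Eventually.of_forall fun n : ℕ => Set.mem_Ioi.2 (by positivity)⟩
    have hlim := ((hstat.gradStarL2.tendsto_apply_tikhonov
      (hstat.mem_closure_range_gradStarL2 hξ2 hξmem)
      (hstat.inner_sub_gradStarL2_eq_zero hf hξ2 hξorth)).comp hεs).inner (𝕜 := ℝ)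
      (tendsto_const_nhds (x := hG.toPiLp))
    rw [← integral_sum_mul_eq_inner hξ2.coeFn_toPiLp hG.coeFn_toPiLp] at hlim
    refine hlim.congr fun n => (integral_sum_mul_eq_inner
      (hstat.coeFn_gradStarL2 ae_eq_rfl) hG.coeFn_toPiLp).symm

/-- Lemma `z03`, weak convergence: for `f ∈ L²(Ω,ℝ^d)` with orthogonal
projection `ξ` onto the `L²`-closure of `{D^*ζ : ζ ∈ L^∞}`, there is a unique family
`(u_ε)_{ε∈(0,1)} ⊆ L²` with `(ε + D·D^*)u_ε = D·f`, and a sequence `ε_n` along which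
`D^* u_{ε_n} → ξ` weakly in `L²`. -/
theorem weak_convergence
    (d : ℕ) (hd : 2 ≤ d)
    (P : Measure (Env d)) [IsProbabilityMeasure P]
    (hstat : Stationary P) (herg : ErgodicEnv P)
    (f : Env d → Fin d → ℝ) (hfmeas : Measurable f) (hf : MemLp f 2 P)
    (ξ : Env d → Fin d → ℝ) (hξmeas : Measurable ξ) (hξ2 : MemLp ξ 2 P)
    -- `ξ` belongs to the `L²`-closure of `{D^*ζ : ζ ∈ L^∞}`:
    (hξmem : ∃ ζ : ℕ → Env d → ℝ, (∀ n, BddMeas P (ζ n)) ∧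
      Tendsto (fun n => ∫ ω, ∑ i : Fin d, (DopStar i (ζ n) ω - ξ ω i) ^ 2 ∂P)
        atTop (nhds 0))
    -- `f - ξ` is orthogonal to that subspace:
    (hξorth : ∀ ζ : Env d → ℝ, BddMeas P ζ →
      ∫ ω, ∑ i : Fin d, (f ω i - ξ ω i) * DopStar i ζ ω ∂P = 0) :
    ∃ u : ℝ → Env d → ℝ,
      (∀ ε ∈ Set.Ioo (0 : ℝ) 1, Measurable (u ε) ∧ MemLp (u ε) 2 P ∧
        ∀ᵐ ω ∂P,
          ε * u ε ω + ∑ i : Fin d, Dop i (DopStar i (u ε)) ω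
            = ∑ i : Fin d, Dop i (fun ω' => f ω' i) ω) ∧
      (∀ u' : ℝ → Env d → ℝ,
        (∀ ε ∈ Set.Ioo (0 : ℝ) 1, Measurable (u' ε) ∧ MemLp (u' ε) 2 P ∧
          ∀ᵐ ω ∂P,
            ε * u' ε ω + ∑ i : Fin d, Dop i (DopStar i (u' ε)) ω
              = ∑ i : Fin d, Dop i (fun ω' => f ω' i) ω) →
        ∀ ε ∈ Set.Ioo (0 : ℝ) 1, u' ε =ᵐ[P] u ε) ∧
      (∃ εs : ℕ → ℝ, (∀ n, εs n ∈ Set.Ioo (0 : ℝ) 1) ∧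
        ∀ G : Env d → Fin d → ℝ, Measurable G → MemLp G 2 P →
          Tendsto (fun n => ∫ ω, ∑ i : Fin d, DopStar i (u (εs n)) ω * G ω i ∂P)
            atTop (nhds (∫ ω, ∑ i : Fin d, ξ ω i * G ω i ∂P))) :=
  weak_convergence_general d P hstat f hf ξ hξ2 hξmem hξorth
end
end

section
/- Let d ≥ 2, let u : ℤ^d → ℝ, and let r ∈ [1,∞]. Assume that limsup_{R→∞} (1/R) inf_{a∈ℝ} ⦀u − a⦀_{r, D_R} = 0. Then limsup_{R→∞} (1/R) ⦀u⦀_{r, D_R} = 0. -/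
open MeasureTheory Filter
open scoped ENNReal Classical

noncomputable section

section DyadicAux

variable {V : Type*}

lemma avNormE_top (A : Finset V) (f : V → ℝ) : avNormE ⊤ A f = supNorm A f := by
  simp [avNormE]

lemma avNormE_ne_top {r : ℝ≥0∞} (hr : r ≠ ⊤) (A : Finset V) (f : V → ℝ) :
    avNormE r A f = avNorm r.toReal A f := by
  simp [avNormE, hr]

lemma supNorm_nonneg (A : Finset V) (u : V → ℝ) : 0 ≤ supNorm A u :=
  Real.iSup_nonneg fun _ => Real.iSup_nonneg fun _ => abs_nonneg _

lemma supNorm_eq_sup' (A : Finset V) (hA : A.Nonempty) (u : V → ℝ) :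
    supNorm A u = A.sup' hA fun x => |u x| := by
  have hb : 0 ≤ A.sup' hA fun x => |u x| := by
    obtain ⟨x, hx⟩ := hA
    exact le_trans (abs_nonneg (u x)) (Finset.le_sup' (fun z => |u z|) hx)
  apply le_antisymm
  · apply Real.iSup_le _ hb
    intro x
    apply Real.iSup_le _ hb
    intro hx
    exact Finset.le_sup' (fun z => |u z|) hx
  · apply Finset.sup'_le
    intro x hx
    have h1 : |u x| = ⨆ _ : x ∈ A, |u x| := (ciSup_pos (f := fun _ => |u x|) hx).symm
    rw [supNorm, h1]
    apply le_ciSup (f := fun y => ⨆ _ : y ∈ A, |u y|)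
    refine ⟨A.sup' hA fun z => |u z|, ?_⟩
    rintro t ⟨y, rfl⟩
    apply Real.iSup_le _ hb
    intro hy
    exact Finset.le_sup' (fun z => |u z|) hy

lemma avNorm_nonneg (p : ℝ) (A : Finset V) (u : V → ℝ) : 0 ≤ avNorm p A u :=
  Real.rpow_nonneg (div_nonneg (Finset.sum_nonneg fun x _ =>
    Real.rpow_nonneg (abs_nonneg _) _) (Nat.cast_nonneg _)) _

lemma avNormE_nonneg (r : ℝ≥0∞) (A : Finset V) (u : V → ℝ) : 0 ≤ avNormE r A u := by
  rcases eq_or_ne r ⊤ with hre | hre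
  · rw [hre, avNormE_top]; exact supNorm_nonneg A u
  · rw [avNormE_ne_top hre]; exact avNorm_nonneg _ _ _

lemma avNormE_congr_abs (r : ℝ≥0∞) (A : Finset V) {f g : V → ℝ} (hfg : ∀ x, |f x| = |g x|) :
    avNormE r A f = avNormE r A g := by
  simp only [avNormE, supNorm, avNorm, hfg]

lemma avNorm_add_le (p : ℝ) (hp : 1 ≤ p) (A : Finset V) (hA : A.Nonempty) (u v : V → ℝ) :
    avNorm p A (fun x => u x + v x) ≤ avNorm p A u + avNorm p A v := by
  have hs : ∀ w : V → ℝ, (0:ℝ) ≤ ∑ x ∈ A, |w x| ^ p :=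
    fun w => Finset.sum_nonneg fun x _ => Real.rpow_nonneg (abs_nonneg _) _
  have hc : (0:ℝ) < (A.card : ℝ) := by exact_mod_cast hA.card_pos
  have hc' : (0:ℝ) < (A.card : ℝ) ^ (1/p) := Real.rpow_pos_of_pos hc _
  simp only [avNorm]
  rw [Real.div_rpow (hs _) (Nat.cast_nonneg _), Real.div_rpow (hs u) (Nat.cast_nonneg _),
    Real.div_rpow (hs v) (Nat.cast_nonneg _), ← add_div]
  gcongr
  exact Real.Lp_add_le (s := A) (f := u) (g := v) hp

lemma avNormE_add_le (r : ℝ≥0∞) (hr : 1 ≤ r) (A : Finset V) (hA : A.Nonempty) (u v : V → ℝ) :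
    avNormE r A (fun x => u x + v x) ≤ avNormE r A u + avNormE r A v := by
  rcases eq_or_ne r ⊤ with hre | hre
  · rw [hre, avNormE_top, avNormE_top, avNormE_top,
      supNorm_eq_sup' A hA, supNorm_eq_sup' A hA, supNorm_eq_sup' A hA]
    apply Finset.sup'_le
    intro x hx
    exact le_trans (abs_add_le _ _) (add_le_add (Finset.le_sup' (fun z => |u z|) hx) (Finset.le_sup' (fun z => |v z|) hx))
  · rw [avNormE_ne_top hre, avNormE_ne_top hre, avNormE_ne_top hre]
    have hp : (1:ℝ) ≤ r.toReal := by
      have := ENNReal.toReal_mono hre hr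
      simpa using this
    exact avNorm_add_le _ hp A hA u v

lemma avNorm_const (p : ℝ) (hp : 1 ≤ p) (A : Finset V) (hA : A.Nonempty) (c : ℝ) :
    avNorm p A (fun _ => c) = |c| := by
  have h0 : p ≠ 0 := by linarith
  have hcard : ((A.card : ℝ)) ≠ 0 := by exact_mod_cast hA.card_pos.ne'
  simp only [avNorm]
  rw [Finset.sum_const, nsmul_eq_mul, mul_div_cancel_left₀ _ hcard, one_div,
    Real.rpow_rpow_inv (abs_nonneg c) h0]

lemma avNormE_const (r : ℝ≥0∞) (hr : 1 ≤ r) (A : Finset V) (hA : A.Nonempty) (c : ℝ) :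
    avNormE r A (fun _ => c) = |c| := by
  rcases eq_or_ne r ⊤ with hre | hre
  · rw [hre, avNormE_top, supNorm_eq_sup' A hA]
    exact Finset.sup'_const hA _
  · rw [avNormE_ne_top hre]
    have hp : (1:ℝ) ≤ r.toReal := by
      have := ENNReal.toReal_mono hre hr
      simpa using this
    exact avNorm_const _ hp A hA c

lemma avNorm_subset_le (p : ℝ) (hp : 1 ≤ p) {A B : Finset V} (hAB : A ⊆ B) (hA : A.Nonempty)
    (u : V → ℝ) : avNorm p A u ≤ ((B.card : ℝ) / (A.card : ℝ)) * avNorm p B u := by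
  have hB : B.Nonempty := hA.mono hAB
  have hA0 : (0:ℝ) < A.card := by exact_mod_cast hA.card_pos
  have hB0 : (0:ℝ) < B.card := by exact_mod_cast hB.card_pos
  have hp0 : (0:ℝ) < p := lt_of_lt_of_le one_pos hp
  have hsA : (0:ℝ) ≤ ∑ x ∈ A, |u x| ^ p :=
    Finset.sum_nonneg fun x _ => Real.rpow_nonneg (abs_nonneg _) _
  have hsB : (0:ℝ) ≤ ∑ x ∈ B, |u x| ^ p :=
    Finset.sum_nonneg fun x _ => Real.rpow_nonneg (abs_nonneg _) _
  have hratio : (1:ℝ) ≤ (B.card : ℝ) / (A.card : ℝ) := by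
    rw [le_div_iff₀ hA0, one_mul]
    exact_mod_cast Finset.card_le_card hAB
  simp only [avNorm]
  have key : (∑ x ∈ A, |u x| ^ p) / (A.card:ℝ)
      ≤ ((B.card:ℝ)/(A.card:ℝ)) * ((∑ x ∈ B, |u x| ^ p) / (B.card:ℝ)) := by
    have e : ((B.card:ℝ)/(A.card:ℝ)) * ((∑ x ∈ B, |u x| ^ p) / (B.card:ℝ))
        = (∑ x ∈ B, |u x| ^ p)/(A.card:ℝ) := by
      field_simp
    rw [e]
    gcongr
  calc ((∑ x ∈ A, |u x| ^ p) / (A.card:ℝ)) ^ (1/p)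
      ≤ (((B.card:ℝ)/(A.card:ℝ)) * ((∑ x ∈ B, |u x| ^ p) / (B.card:ℝ))) ^ (1/p) :=
        Real.rpow_le_rpow (div_nonneg hsA hA0.le) key (by positivity)
    _ = ((B.card:ℝ)/(A.card:ℝ))^(1/p) * ((∑ x ∈ B, |u x| ^ p) / (B.card:ℝ))^(1/p) :=
        Real.mul_rpow (by positivity) (div_nonneg hsB hB0.le)
    _ ≤ ((B.card:ℝ)/(A.card:ℝ)) * ((∑ x ∈ B, |u x| ^ p) / (B.card:ℝ))^(1/p) := by
        apply mul_le_mul_of_nonneg_right _ (Real.rpow_nonneg (div_nonneg hsB hB0.le) _)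
        calc ((B.card:ℝ)/(A.card:ℝ))^(1/p) ≤ ((B.card:ℝ)/(A.card:ℝ))^(1:ℝ) :=
            Real.rpow_le_rpow_of_exponent_le hratio (by rw [div_le_one hp0]; exact hp)
          _ = _ := Real.rpow_one _

lemma avNormE_subset_le (r : ℝ≥0∞) (hr : 1 ≤ r) {A B : Finset V} (hAB : A ⊆ B) (hA : A.Nonempty)
    (u : V → ℝ) : avNormE r A u ≤ ((B.card : ℝ) / (A.card : ℝ)) * avNormE r B u := by
  have hB : B.Nonempty := hA.mono hAB
  have hA0 : (0:ℝ) < A.card := by exact_mod_cast hA.card_pos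
  have hratio : (1:ℝ) ≤ (B.card : ℝ) / (A.card : ℝ) := by
    rw [le_div_iff₀ hA0, one_mul]
    exact_mod_cast Finset.card_le_card hAB
  rcases eq_or_ne r ⊤ with hre | hre
  · rw [hre, avNormE_top, avNormE_top]
    calc supNorm A u ≤ supNorm B u := by
          rw [supNorm_eq_sup' A hA, supNorm_eq_sup' B hB]
          exact Finset.sup'_mono _ hAB hA
      _ ≤ _ := le_mul_of_one_le_left (supNorm_nonneg B u) hratio
  · rw [avNormE_ne_top hre, avNormE_ne_top hre]
    have hp : (1:ℝ) ≤ r.toReal := by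
      have := ENNReal.toReal_mono hre hr
      simpa using this
    exact avNorm_subset_le _ hp hAB hA u

end DyadicAux

lemma boxD_card (d R : ℕ) : (boxD d R).card = (2*(R:ℤ)-1).toNat ^ d := by
  rw [boxD, Fintype.card_piFinset]
  have e : ∀ _i : Fin d, (Finset.Ioo (-(R:ℤ)) (R:ℤ)).card = (2*(R:ℤ)-1).toNat := by
    intro i
    rw [Int.card_Ioo]
    congr 1
    ring
  rw [Finset.prod_congr rfl (fun i _ => e i), Finset.prod_const, Finset.card_univ,
    Fintype.card_fin]

lemma boxD_nonempty (d : ℕ) {R : ℕ} (hR : 1 ≤ R) : (boxD d R).Nonempty := by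
  refine ⟨fun _ => 0, ?_⟩
  rw [boxD, Fintype.mem_piFinset]
  intro i
  rw [Finset.mem_Ioo]
  omega

lemma boxD_subset (d : ℕ) {R S : ℕ} (h : R ≤ S) : boxD d R ⊆ boxD d S := by
  intro x hx
  rw [boxD, Fintype.mem_piFinset] at hx ⊢
  intro i
  have := hx i
  rw [Finset.mem_Ioo] at this ⊢
  omega

lemma boxD_card_ratio (d : ℕ) {R S : ℕ} (hR : 1 ≤ R) (hS : S ≤ 2*R) :
    ((boxD d S).card : ℝ) ≤ 3^d * ((boxD d R).card : ℝ) := by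
  rw [boxD_card, boxD_card]
  have h1 : (2*(S:ℤ)-1).toNat ≤ 3 * (2*(R:ℤ)-1).toNat := by omega
  have h2 : (2*(S:ℤ)-1).toNat ^ d ≤ 3^d * (2*(R:ℤ)-1).toNat ^ d := by
    calc (2*(S:ℤ)-1).toNat ^ d ≤ (3 * (2*(R:ℤ)-1).toNat)^d := Nat.pow_le_pow_left h1 d
      _ = _ := by rw [mul_pow]
  exact_mod_cast h2

/-- dyadic argument: if `u : ℤ^d → ℝ`, `r ∈ [1,∞]` and
`(1/R) inf_a ⦀u - a⦀_{r,D_R} → 0` as `R → ∞`, then `(1/R) ⦀u⦀_{r,D_R} → 0`. -/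
theorem dyadic_argument (d : ℕ) (hd : 2 ≤ d) (u : Zd d → ℝ) (r : ℝ≥0∞) (hr : 1 ≤ r)
    (h : Tendsto (fun R : ℕ =>
        (⨅ a : ℝ, avNormE r (boxD d R) (fun x => u x - a)) / (R : ℝ)) atTop (nhds 0)) :
    Tendsto (fun R : ℕ => avNormE r (boxD d R) u / (R : ℝ)) atTop (nhds 0) := by
  classical
  set K : ℝ := (3:ℝ)^d with hK
  have hK1 : (1:ℝ) ≤ K := one_le_pow₀ (by norm_num)
  have h1K : (0:ℝ) < 1 + K := by linarith
  have heps0 : ∀ R : ℕ, 0 ≤ ⨅ a : ℝ, avNormE r (boxD d R) (fun x => u x - a) :=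
    fun R => le_ciInf fun a => avNormE_nonneg _ _ _
  have hA0 : ∀ R : ℕ, 0 ≤ avNormE r (boxD d R) u := fun R => avNormE_nonneg _ _ _
  -- the one-step inequality
  have hstep : ∀ R S : ℕ, 1 ≤ R → R ≤ S → S ≤ 2*R →
      avNormE r (boxD d S) u ≤ avNormE r (boxD d R) u
        + (1+K) * ⨅ a : ℝ, avNormE r (boxD d S) (fun x => u x - a) := by
    intro R S hR hRS hS2
    have hSne : (boxD d S).Nonempty := boxD_nonempty d (le_trans hR hRS)
    have hRne : (boxD d R).Nonempty := boxD_nonempty d hR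
    apply le_of_forall_pos_le_add
    intro ε hε
    have hδ : (0:ℝ) < ε / (1+K) := div_pos hε h1K
    obtain ⟨a, ha⟩ := exists_lt_of_ciInf_lt
      (show (⨅ a : ℝ, avNormE r (boxD d S) (fun x => u x - a))
        < (⨅ a : ℝ, avNormE r (boxD d S) (fun x => u x - a)) + ε / (1+K) by linarith)
    -- triangle on D_S : ⦀u⦀ ≤ ⦀u-a⦀ + |a|
    have h1 : avNormE r (boxD d S) u
        ≤ avNormE r (boxD d S) (fun x => u x - a) + |a| := by
      have t := avNormE_add_le r hr (boxD d S) hSne (fun x => u x - a) (fun _ => a)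
      have e : (fun x => (u x - a) + a) = u := by funext x; ring
      rw [e, avNormE_const r hr _ hSne] at t
      exact t
    -- |a| ≤ ⦀u⦀_{D_R} + ⦀u-a⦀_{D_R}
    have h2 : |a| ≤ avNormE r (boxD d R) u + avNormE r (boxD d R) (fun x => u x - a) := by
      have t := avNormE_add_le r hr (boxD d R) hRne u (fun x => a - u x)
      have e : (fun x => u x + (a - u x)) = (fun _ : Zd d => a) := by funext x; ring
      rw [e, avNormE_const r hr _ hRne] at t
      have e2 : avNormE r (boxD d R) (fun x => a - u x)
          = avNormE r (boxD d R) (fun x => u x - a) :=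
        avNormE_congr_abs r _ fun x => abs_sub_comm _ _
      rw [e2] at t
      exact t
    -- comparison of the two boxes
    have h3 : avNormE r (boxD d R) (fun x => u x - a)
        ≤ K * avNormE r (boxD d S) (fun x => u x - a) := by
      have hsub := avNormE_subset_le r hr (boxD_subset d hRS) hRne (fun x => u x - a)
      have hcardR : (0:ℝ) < ((boxD d R).card : ℝ) := by exact_mod_cast hRne.card_pos
      have hrat : ((boxD d S).card : ℝ)/((boxD d R).card : ℝ) ≤ K := by
        rw [div_le_iff₀ hcardR, hK]
        exact boxD_card_ratio d hR hS2
      calc avNormE r (boxD d R) (fun x => u x - a)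
          ≤ ((boxD d S).card : ℝ)/((boxD d R).card : ℝ)
            * avNormE r (boxD d S) (fun x => u x - a) := hsub
        _ ≤ K * avNormE r (boxD d S) (fun x => u x - a) :=
            mul_le_mul_of_nonneg_right hrat (avNormE_nonneg _ _ _)
    have h4 : K * avNormE r (boxD d S) (fun x => u x - a)
        ≤ K * ((⨅ a : ℝ, avNormE r (boxD d S) (fun x => u x - a)) + ε/(1+K)) :=
      mul_le_mul_of_nonneg_left ha.le (by linarith)
    have h5 : (1+K) * (ε/(1+K)) = ε := mul_div_cancel₀ _ h1K.ne'
    nlinarith [ha.le]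
  -- the linear growth bound
  have hbound : ∀ δ : ℝ, 0 < δ → ∃ C : ℝ, 0 ≤ C ∧
      ∀ R : ℕ, 1 ≤ R → avNormE r (boxD d R) u ≤ C + δ * R := by
    intro δ hδ
    have hδ' : (0:ℝ) < δ / (4*(1+K)) := div_pos hδ (by linarith)
    have hev : ∀ᶠ R : ℕ in atTop,
        (⨅ a : ℝ, avNormE r (boxD d R) (fun x => u x - a)) / (R:ℝ) < δ / (4*(1+K)) :=
      h.eventually (gt_mem_nhds hδ')
    obtain ⟨M, hM⟩ := eventually_atTop.mp hev
    set M' := max M 2 with hM'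
    have hepsR : ∀ R : ℕ, M' ≤ R →
        (⨅ a : ℝ, avNormE r (boxD d R) (fun x => u x - a)) ≤ (δ / (4*(1+K))) * R := by
      intro R hRM
      have h5 := hM R (le_trans (le_max_left _ _) hRM)
      have hRpos : (0:ℝ) < (R:ℝ) := by
        have : 2 ≤ R := le_trans (le_max_right _ _) hRM
        exact_mod_cast by omega
      rw [div_lt_iff₀ hRpos] at h5
      linarith
    refine ⟨∑ i ∈ Finset.range (2*M'+1), avNormE r (boxD d i) u,
      Finset.sum_nonneg fun i _ => hA0 i, ?_⟩
    intro R
    induction R using Nat.strong_induction_on with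
    | _ R ih =>
      intro hR1
      by_cases hcase : R ≤ 2*M'
      · have hle : avNormE r (boxD d R) u ≤ ∑ i ∈ Finset.range (2*M'+1), avNormE r (boxD d i) u :=
          Finset.single_le_sum (fun i _ => hA0 i) (Finset.mem_range.mpr (by omega))
        have : (0:ℝ) ≤ δ * R := mul_nonneg hδ.le (Nat.cast_nonneg _)
        linarith
      · push_neg at hcase
        have hM2 : 2 ≤ M' := le_max_right _ _
        set R' := (R+1)/2 with hR'def
        have hf1 : 1 ≤ R' := by omega
        have hf2 : R' < R := by omega
        have hf3 : R ≤ 2*R' := by omega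
        have hf4 : R' ≤ R := by omega
        have hstepR := hstep R' R hf1 hf4 hf3
        have hih := ih R' hf2 hf1
        have heps := hepsR R (by omega)
        have hq : (1+K) * (δ / (4*(1+K))) = δ/4 := by
          field_simp
        have e1 : (1+K) * (⨅ a : ℝ, avNormE r (boxD d R) (fun x => u x - a)) ≤ (δ/4) * R := by
          calc (1+K) * (⨅ a : ℝ, avNormE r (boxD d R) (fun x => u x - a))
              ≤ (1+K) * ((δ / (4*(1+K))) * R) := mul_le_mul_of_nonneg_left heps (by linarith)
            _ = (δ/4) * R := by rw [← mul_assoc, hq]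
        have hcast : (R' : ℝ) ≤ ((R:ℝ)+1)/2 := by
          rw [le_div_iff₀ (by norm_num : (0:ℝ) < 2)]
          have : R' * 2 ≤ R + 1 := by omega
          exact_mod_cast this
        have e2 : δ * R' ≤ δ * (((R:ℝ)+1)/2) := mul_le_mul_of_nonneg_left hcast hδ.le
        have hRge : (2:ℝ) ≤ (R:ℝ) := by exact_mod_cast (by omega : 2 ≤ R)
        have e3 : δ * 2 ≤ δ * R := mul_le_mul_of_nonneg_left hRge hδ.le
        nlinarith
  -- conclusion
  rw [Metric.tendsto_atTop]
  intro ε hε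
  obtain ⟨C, hC0, hC⟩ := hbound (ε/2) (by positivity)
  obtain ⟨N, hN⟩ := exists_nat_gt (max 1 (2*C/ε))
  refine ⟨N+1, fun n hn => ?_⟩
  have hn1 : 1 ≤ n := by omega
  have hnpos : (0:ℝ) < (n:ℝ) := by exact_mod_cast hn1
  have hdist : dist (avNormE r (boxD d n) u / (n:ℝ)) 0 = avNormE r (boxD d n) u / (n:ℝ) := by
    rw [Real.dist_eq, sub_zero, abs_of_nonneg (div_nonneg (hA0 n) hnpos.le)]
  rw [hdist]
  have hAn := hC n hn1
  have hNn : (N:ℝ) < (n:ℝ) := by exact_mod_cast (by omega : N < n)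
  have hgt : 2*C/ε < (n:ℝ) := lt_trans (lt_of_le_of_lt (le_max_right 1 (2*C/ε)) hN) hNn
  rw [div_lt_iff₀ hε] at hgt
  rw [div_lt_iff₀ hnpos]
  nlinarith


end
end

section
/- Assume the corrector setting: ω ∈ Ω, a = a^ω the diagonal conductance field, a_h ∈ ℝ^{d×d}, and functions φ_i, σ_{ijk}, q_{ij} : ℤ^d → ℝ satisfying, for all i,j,k ∈ {1,…,d} and all points of ℤ^d: q_i = a(∇φ_i + e_i) − a_h e_i, −∇^*·q_i = 0, −∇^*·σ_i = q_i, and σ_{ijk} = −σ_{ikj}. Let x ∈ ℤ^d and let u, v, w, η : ℤ^d → ℝ satisfy w = u − v − η φ_i ∇_i v on ℤ^d (summation over i) and (∇^*·a∇u)(x) = (∇^*·a_h∇v)(x) = 0. Then (∇^*·a∇w)(x) = −(∇^*·((1−η)(a−a_h)∇v))(x) − (∇^*·[(σ_i·∇^*)(η∇_i v)])(x) − (∇^*·a[(φ_i∇)(η∇_i v)])(x), with summation over i in the last two terms. -/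
open MeasureTheory Filter
open scoped ENNReal Classical

noncomputable section

/-!
Expanding `∇_j w` with the discrete product rule and substituting
`a_j ∇_j φ_i = q_{ij} - a_j δ_{ij} + (a_h)_{ji}` writes `a∇w` pointwise as
`a∇u - (1-η)(a-a_h)∇v - a_h∇v - a(φ_i∇)(η∇_i v) - (η∇_i v) q_i`. Taking `∇^*·`, the first and
third terms vanish at `x` by harmonicity, and `∇^*·(G q_i) = ∇^*·((σ_i·∇^*)G)` for every `G`
because `q_i = -∇^*·σ_i` with `σ_i` skew.
-/

open Finset

theorem sum_sum_eq_zero_of_antisymm {ι : Type*} [Fintype ι] (F : ι → ι → ℝ)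
    (hF : ∀ j k, F j k = -F k j) : ∑ j, ∑ k, F j k = 0 := by
  have h : ∑ j, ∑ k, F j k = -∑ j, ∑ k, F j k := by
    conv_lhs => rw [sum_comm]
    simp only [← sum_neg_distrib]
    exact sum_congr rfl fun k _ => sum_congr rfl fun j _ => hF j k
  linarith

section Lattice

variable {d : ℕ}

theorem dGrad_mul (f g : Zd d → ℝ) (j : Fin d) (y : Zd d) :
    dGrad j (fun z => f z * g z) y = f (y + unitVec j) * dGrad j g y + g y * dGrad j f y := by
  simp only [dGrad]
  ring

theorem divStar_sub (F G : Zd d → Fin d → ℝ) (x : Zd d) :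
    divStar (F - G) x = divStar F x - divStar G x := by
  simp only [divStar, Pi.sub_apply, ← sum_sub_distrib]
  exact sum_congr rfl fun _ _ => by ring

theorem divStar_sum {ι : Type*} (s : Finset ι) (F : ι → Zd d → Fin d → ℝ) (x : Zd d) :
    divStar (fun y j => ∑ i ∈ s, F i y j) x = ∑ i ∈ s, divStar (F i) x := by
  simp only [divStar, ← sum_sub_distrib]
  exact sum_comm

theorem divStar_mul_flux_eq_divStar_skew (σ : Fin d → Fin d → Zd d → ℝ)
    (q : Fin d → Zd d → ℝ) (hσ : ∀ j k y, σ j k y = -σ k j y)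
    (hq : ∀ j y, -divStar (fun z k => σ j k z) y = q j y) (G : Zd d → ℝ) (x : Zd d) :
    divStar (fun y j => G y * q j y) x
      = divStar (fun y j => ∑ k, σ j k (y - unitVec k) * dGradStar k G y) x := by
  -- the difference is a double sum over `(j, k)` of a term antisymmetric under `j ↔ k`
  rw [← sub_eq_zero]
  simp only [← hq, divStar, dGradStar, mul_neg, mul_sum, ← sum_neg_distrib, ← sum_sub_distrib]
  refine sum_sum_eq_zero_of_antisymm _ fun j k => ?_
  simp only [hσ k j, sub_right_comm x (unitVec k) (unitVec j)]
  ring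

theorem flux_eq_of_two_scale_expansion (a : Zd d → Fin d → ℝ) (ah : Matrix (Fin d) (Fin d) ℝ)
    (φ : Fin d → Zd d → ℝ) (q : Fin d → Fin d → Zd d → ℝ)
    (hq : ∀ i j y, q i j y = a y j * (dGrad j (φ i) y + if j = i then 1 else 0) - ah j i)
    (u v w η : Zd d → ℝ) (hw : ∀ y, w y = u y - v y - ∑ i, η y * φ i y * dGrad i v y)
    (y : Zd d) (j : Fin d) :
    a y j * dGrad j w y
      = a y j * dGrad j u y
        - (1 - η y) * (a y j * dGrad j v y - ∑ k, ah j k * dGrad k v y)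
        - ∑ k, ah j k * dGrad k v y
        - a y j * ∑ i, φ i (y + unitVec j) * dGrad j (fun z => η z * dGrad i v z) y
        - ∑ i, η y * dGrad i v y * q i j y := by
  have hw' : w = fun z => u z - v z - ∑ i, φ i z * (η z * dGrad i v z) := by
    ext z
    simp only [hw, mul_comm, mul_left_comm]
  have grad_w : dGrad j w y = dGrad j u y - dGrad j v y
      - ∑ i, φ i (y + unitVec j) * dGrad j (fun z => η z * dGrad i v z) y
      - ∑ i, η y * dGrad i v y * dGrad j (φ i) y := by
    have product_rule := sum_congr rfl fun i (_ : i ∈ univ) =>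
      dGrad_mul (φ i) (fun z => η z * dGrad i v z) j y
    rw [sum_add_distrib] at product_rule
    simp only [hw', dGrad, sum_sub_distrib] at product_rule ⊢
    linear_combination -product_rule
  have corrector_flux : a y j * ∑ i, η y * dGrad i v y * dGrad j (φ i) y
      = ∑ i, η y * dGrad i v y * q i j y - a y j * (η y * dGrad j v y)
        + η y * ∑ k, ah j k * dGrad k v y :=
    calc a y j * ∑ i, η y * dGrad i v y * dGrad j (φ i) y
        = ∑ i, (η y * dGrad i v y * q i j y - (if j = i then a y j * (η y * dGrad i v y) else 0)
            + η y * (ah j i * dGrad i v y)) := by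
          rw [mul_sum]
          refine sum_congr rfl fun i _ => ?_
          rw [hq]
          split_ifs <;> ring
      _ = _ := by
          simp only [sum_add_distrib, sum_sub_distrib, sum_ite_eq, mem_univ, if_true, mul_sum]
  rw [grad_w]
  linear_combination -corrector_flux

theorem divStar_flux_eq_of_two_scale_expansion (a : Zd d → Fin d → ℝ)
    (ah : Matrix (Fin d) (Fin d) ℝ) (φ : Fin d → Zd d → ℝ) (q : Fin d → Fin d → Zd d → ℝ)
    (hq : ∀ i j y, q i j y = a y j * (dGrad j (φ i) y + if j = i then 1 else 0) - ah j i)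
    (u v w η : Zd d → ℝ) (hw : ∀ y, w y = u y - v y - ∑ i, η y * φ i y * dGrad i v y)
    (x : Zd d) :
    divStar (fun y j => a y j * dGrad j w y) x
      = divStar (fun y j => a y j * dGrad j u y) x
        - divStar (fun y j => (1 - η y) * (a y j * dGrad j v y - ∑ k, ah j k * dGrad k v y)) x
        - divStar (fun y j => ∑ k, ah j k * dGrad k v y) x
        - divStar (fun y j =>
            a y j * ∑ i, φ i (y + unitVec j) * dGrad j (fun z => η z * dGrad i v z) y) x
        - divStar (fun y j => ∑ i, η y * dGrad i v y * q i j y) x := by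
  simp only [← divStar_sub]
  congr 1
  ext y j
  exact flux_eq_of_two_scale_expansion a ah φ q hq u v w η hw y j

end Lattice

theorem homogenization_error_equation_general
    (d : ℕ) (ω : Env d) (ah : Matrix (Fin d) (Fin d) ℝ)
    (φ : Fin d → Zd d → ℝ) (σ : Fin d → Fin d → Fin d → Zd d → ℝ)
    (qf : Fin d → Fin d → Zd d → ℝ)
    (hq : ∀ (i j : Fin d) (x : Zd d),
      qf i j x = cval ω x j * (dGrad j (φ i) x + (if j = i then 1 else 0)) - ah j i)
    (hdivσ : ∀ (i j : Fin d) (x : Zd d),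
      -(∑ k : Fin d, (σ i j k (x - unitVec k) - σ i j k x)) = qf i j x)
    (hskew : ∀ (i j k : Fin d) (x : Zd d), σ i j k x = - σ i k j x)
    (x : Zd d) (u v w η : Zd d → ℝ)
    (hw : ∀ y : Zd d, w y = u y - v y - ∑ i : Fin d, η y * φ i y * dGrad i v y)
    (hu : divStar (fun y j => cval ω y j * dGrad j u y) x = 0)
    (hv : divStar (fun y j => ∑ k : Fin d, ah j k * dGrad k v y) x = 0) :
    divStar (fun y j => cval ω y j * dGrad j w y) x
      = - divStar (fun y j =>
            (1 - η y) * (cval ω y j * dGrad j v y - ∑ k : Fin d, ah j k * dGrad k v y)) x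
        - divStar (fun y j => ∑ i : Fin d, ∑ k : Fin d,
            σ i j k (y - unitVec k) * dGradStar k (fun z => η z * dGrad i v z) y) x
        - divStar (fun y j => cval ω y j * ∑ i : Fin d,
            φ i (y + unitVec j) * dGrad j (fun z => η z * dGrad i v z) y) x := by
  have corrector_term : divStar (fun y j => ∑ i, η y * dGrad i v y * qf i j y) x
      = divStar (fun y j => ∑ i, ∑ k,
          σ i j k (y - unitVec k) * dGradStar k (fun z => η z * dGrad i v z) y) x := by
    rw [divStar_sum, divStar_sum]
    exact sum_congr rfl fun i _ =>
      divStar_mul_flux_eq_divStar_skew (σ i) (qf i) (hskew i) (hdivσ i) _ x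
  rw [divStar_flux_eq_of_two_scale_expansion (cval ω) ah φ qf hq u v w η hw x, hu, hv,
    corrector_term]
  ring

/-- equation for the homogenization error, Lemma `a73`:
given correctors `φ, σ, q` for the environment `ω` and homogenized matrix `ah`, if
`w = u - v - η φ_i ∇_i v` on `ℤ^d` (summation over `i`) and `u` is `a`-harmonic and `v` is
`a_h`-harmonic at the point `x`, then
`(∇^*·a∇w)(x) = -(∇^*·((1-η)(a-a_h)∇v))(x) - (∇^*·[(σ_i·∇^*)(η∇_i v)])(x)
  - (∇^*·a[(φ_i∇)(η∇_i v)])(x)`. -/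
theorem homogenization_error_equation
    (d : ℕ) (hd : 2 ≤ d) (ω : Env d) (ah : Matrix (Fin d) (Fin d) ℝ)
    (φ : Fin d → Zd d → ℝ) (σ : Fin d → Fin d → Fin d → Zd d → ℝ)
    (qf : Fin d → Fin d → Zd d → ℝ)
    (hq : ∀ (i j : Fin d) (x : Zd d),
      qf i j x = cval ω x j * (dGrad j (φ i) x + (if j = i then 1 else 0)) - ah j i)
    (hdivq : ∀ (i : Fin d) (x : Zd d),
      -(∑ j : Fin d, (qf i j (x - unitVec j) - qf i j x)) = 0)
    (hdivσ : ∀ (i j : Fin d) (x : Zd d),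
      -(∑ k : Fin d, (σ i j k (x - unitVec k) - σ i j k x)) = qf i j x)
    (hskew : ∀ (i j k : Fin d) (x : Zd d), σ i j k x = - σ i k j x)
    (x : Zd d) (u v w η : Zd d → ℝ)
    (hw : ∀ y : Zd d, w y = u y - v y - ∑ i : Fin d, η y * φ i y * dGrad i v y)
    (hu : divStar (fun y j => cval ω y j * dGrad j u y) x = 0)
    (hv : divStar (fun y j => ∑ k : Fin d, ah j k * dGrad k v y) x = 0) :
    divStar (fun y j => cval ω y j * dGrad j w y) x
      = - divStar (fun y j =>
            (1 - η y) * (cval ω y j * dGrad j v y - ∑ k : Fin d, ah j k * dGrad k v y)) x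
        - divStar (fun y j => ∑ i : Fin d, ∑ k : Fin d,
            σ i j k (y - unitVec k) * dGradStar k (fun z => η z * dGrad i v z) y) x
        - divStar (fun y j => cval ω y j * ∑ i : Fin d,
            φ i (y + unitVec j) * dGrad j (fun z => η z * dGrad i v z) y) x :=
  homogenization_error_equation_general d ω ah φ σ qf hq hdivσ hskew x u v w η hw hu hv

end
end

section
/- Let d ≥ 2 and R ∈ ℕ. Let g : E^d_± → ℝ, w : ℤ^d → ℝ, and h, f : ℤ^d → ℝ^d satisfy: g(x,y) = −g(y,x) for all (x,y) ∈ E^d_±; h_i(x) = g(x, x+e_i) for all x ∈ ℤ^d and i ∈ {1,…,d}; (∇^*·h)(x) = (∇^*·f)(x) for all x ∈ D_R; and f(x) = 0 for all x ∈ ℤ^d \ D_{R−1}. Then Σ_{(x,y)∈E_R} g(x,y) ∇̄_{xy} w = 2 Σ_{y∈∂̃D_R} g(n_R(y)) w(y) + 2 Σ_{x∈D_R} ∇w(x) · f(x). -/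
open MeasureTheory Filter
open scoped ENNReal Classical

noncomputable section

/-!
Antisymmetry of `g` pairs every edge of `E_R` with its reversal, so the left-hand side is twice a
sum over the positive edges `(x, x + e_i)`, which are exactly those with an endpoint in `D_R`.
Summation by parts in each direction `i` turns this into `∑_{D_R} (∇^*·h) w` plus the flux of `h`
through the two faces of `∂̃D_R` normal to `e_i`; on those faces `h` is `±g(n_R(y))`, since the
normal edge of a boundary point `y` is `(y - ν(y), y)` for the outward normal `ν(y)`.
Finally `∇^*·h = ∇^*·f` on `D_R`, and summing by parts back produces no boundary terms because
`f` vanishes outside `D_{R-1}`.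
-/

section SummationByParts

variable {G M : Type*} [AddCommGroup G] [DecidableEq G] [CommRing M]
  (D : Finset G) (v : G) (a b : G → M)

theorem sum_by_parts_translate :
    ∑ x ∈ D ∪ D.map (Equiv.subRight v).toEmbedding, a x * (b (x + v) - b x)
      = ∑ x ∈ D, (a (x - v) - a x) * b x
        + ∑ y ∈ D.map (Equiv.addRight v).toEmbedding \ D, a (y - v) * b y
        - ∑ y ∈ D.map (Equiv.subRight v).toEmbedding \ D, a y * b y := by
  set Dm := D.map (Equiv.subRight v).toEmbedding
  set Dp := D.map (Equiv.addRight v).toEmbedding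
  have hshift : (D ∪ Dm).map (Equiv.addRight v).toEmbedding = D ∪ (Dp \ D) := by
    ext y
    simp [Dm, Dp, Finset.mem_map_equiv, or_comm]
  have hforward : ∑ x ∈ D ∪ Dm, a x * b (x + v)
      = ∑ y ∈ D, a (y - v) * b y + ∑ y ∈ Dp \ D, a (y - v) * b y := by
    rw [← Finset.sum_union Finset.disjoint_sdiff, ← hshift, Finset.sum_map]
    simp
  have hbackward : ∑ x ∈ D ∪ Dm, a x * b x = ∑ x ∈ D, a x * b x + ∑ y ∈ Dm \ D, a y * b y := by
    rw [← Finset.sum_union Finset.disjoint_sdiff, Finset.union_sdiff_self_eq_union]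
  simp only [mul_sub, sub_mul, Finset.sum_sub_distrib, hforward, hbackward]
  ring

theorem sum_by_parts_translate_of_support (ha : ∀ x, x ∉ D ∨ x + v ∉ D → a x = 0) :
    ∑ x ∈ D, (a (x - v) - a x) * b x = ∑ x ∈ D, a x * (b (x + v) - b x) := by
  have hforward : ∑ y ∈ D.map (Equiv.addRight v).toEmbedding \ D, a (y - v) * b y = 0 :=
    Finset.sum_eq_zero fun y hy => by
      simp only [Finset.mem_sdiff, Finset.mem_map_equiv] at hy
      simp [ha (y - v) (Or.inr (by simpa using hy.2))]
  have hbackward : ∑ y ∈ D.map (Equiv.subRight v).toEmbedding \ D, a y * b y = 0 :=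
    Finset.sum_eq_zero fun y hy => by simp [ha y (Or.inl (Finset.mem_sdiff.1 hy).2)]
  have hsupport : ∑ x ∈ D ∪ D.map (Equiv.subRight v).toEmbedding, a x * (b (x + v) - b x)
      = ∑ x ∈ D, a x * (b (x + v) - b x) :=
    (Finset.sum_subset Finset.subset_union_left fun x _ hx => by simp [ha x (Or.inl hx)]).symm
  rw [← hsupport, sum_by_parts_translate, hforward, hbackward, add_zero, sub_zero]

end SummationByParts

section Lattice

variable {d : ℕ}

@[simp] lemma unitVec_apply (i j : Fin d) : unitVec i j = if j = i then 1 else 0 := rfl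

lemma unitVec_injective : Function.Injective (unitVec : Fin d → Zd d) := by
  intro i j hij
  by_contra hne
  simpa [unitVec, hne] using congrFun hij i

lemma unitVec_ne_neg (i j : Fin d) : unitVec i ≠ -unitVec j := by
  intro hij
  have := congrFun hij i
  by_cases h : i = j <;> simp [unitVec, h] at this

lemma Adj.symm {x y : Zd d} (hxy : Adj x y) : Adj y x :=
  let ⟨i, hi⟩ := hxy; ⟨i, hi.symm⟩

lemma adj_add_unitVec (x : Zd d) (i : Fin d) : Adj x (x + unitVec i) := ⟨i, Or.inl rfl⟩

variable {R : ℕ}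

lemma mem_boxD {x : Zd d} : x ∈ boxD d R ↔ ∀ j, -(R : ℤ) < x j ∧ x j < R := by
  simp [boxD]

lemma mem_boxC {x : Zd d} : x ∈ boxC d R ↔ ∀ j, -(R : ℤ) ≤ x j ∧ x j ≤ R := by
  simp [boxC]

lemma adj_of_mem_ER {e : Zd d × Zd d} (he : e ∈ ER d R) : Adj e.1 e.2 :=
  (Finset.mem_filter.1 he).2.1

lemma swap_mem_ER {e : Zd d × Zd d} (he : e ∈ ER d R) : e.swap ∈ ER d R := by
  simp only [ER, Finset.mem_filter, Finset.mem_product] at he ⊢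
  obtain ⟨⟨h1, h2⟩, hadj, hsum⟩ := he
  exact ⟨⟨h2, h1⟩, hadj.symm, fun j => by rw [add_comm]; exact hsum j⟩

lemma mk_add_unitVec_mem_ER_iff_coords {x : Zd d} {i : Fin d} :
    (x, x + unitVec i) ∈ ER d R ↔
      (-(R : ℤ) ≤ x i ∧ x i < R) ∧ ∀ j, j ≠ i → -(R : ℤ) < x j ∧ x j < R := by
  simp only [ER, Finset.mem_filter, Finset.mem_product, mem_boxC, Pi.add_apply, unitVec_apply,
    abs_lt, adj_add_unitVec, true_and]
  constructor
  · rintro ⟨-, hsum⟩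
    refine ⟨by have := hsum i; simp at this; omega, fun j hj => ?_⟩
    have := hsum j
    simp [hj] at this
    omega
  · rintro ⟨hi, hj⟩
    have hx : ∀ j, -(R : ℤ) ≤ x j ∧ x j ≤ R := fun j => by
      rcases eq_or_ne j i with rfl | hji
      · omega
      · have := hj j hji; omega
    refine ⟨⟨hx, fun j => ?_⟩, fun j => ?_⟩ <;> split_ifs with hji <;>
      first | (subst hji; omega) | (have := hj j hji; omega)

lemma mk_add_unitVec_mem_ER_iff {x : Zd d} {i : Fin d} :
    (x, x + unitVec i) ∈ ER d R ↔
      x ∈ boxD d R ∪ (boxD d R).map (Equiv.subRight (unitVec i)).toEmbedding := by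
  rw [mk_add_unitVec_mem_ER_iff_coords, Finset.mem_union, Finset.mem_map_equiv,
    Equiv.subRight_symm_apply, mem_boxD, mem_boxD]
  constructor
  · rintro ⟨hi, hj⟩
    by_cases hxi : x i = -(R : ℤ)
    · refine Or.inr fun j => ?_
      rcases eq_or_ne j i with rfl | hji
      · simp; omega
      · simp [hji, hj j hji]
    · refine Or.inl fun j => ?_
      rcases eq_or_ne j i with rfl | hji
      · omega
      · exact hj j hji
  · rintro (hx | hx)
    · exact ⟨by have := hx i; omega, fun j _ => hx j⟩
    · refine ⟨by have := hx i; simp at this; omega, fun j hji => ?_⟩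
      simpa [hji] using hx j

@[simps]
def posEdge : (Σ _ : Fin d, Zd d) ↪ Zd d × Zd d where
  toFun p := (p.2, p.2 + unitVec p.1)
  inj' := by
    rintro ⟨i, x⟩ ⟨j, y⟩ h
    obtain ⟨rfl, h⟩ := Prod.mk.inj h
    obtain rfl := unitVec_injective (add_left_cancel h)
    rfl

def negEdge : (Σ _ : Fin d, Zd d) ↪ Zd d × Zd d :=
  posEdge.trans (Equiv.prodComm _ _).toEmbedding

@[simp] lemma negEdge_apply (p : Σ _ : Fin d, Zd d) : negEdge p = (p.2 + unitVec p.1, p.2) := rfl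

lemma disjoint_map_posEdge_map_negEdge (S : Finset (Σ _ : Fin d, Zd d)) :
    Disjoint (S.map posEdge) (S.map negEdge) := by
  simp only [Finset.disjoint_left, Finset.mem_map, not_exists, not_and]
  rintro _ ⟨⟨i, x⟩, -, rfl⟩ ⟨j, y⟩ - h
  simp only [negEdge_apply, posEdge_apply, Prod.mk.injEq] at h
  obtain ⟨rfl, h⟩ := h
  rw [add_assoc, left_eq_add] at h
  exact unitVec_ne_neg j i (eq_neg_of_add_eq_zero_left h)

def posEdgeTails (d R : ℕ) : Finset (Σ _ : Fin d, Zd d) :=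
  Finset.univ.sigma fun i => boxD d R ∪ (boxD d R).map (Equiv.subRight (unitVec i)).toEmbedding

@[simp] lemma mem_posEdgeTails {p : Σ _ : Fin d, Zd d} :
    p ∈ posEdgeTails d R ↔ posEdge p ∈ ER d R := by
  simp [posEdgeTails, mk_add_unitVec_mem_ER_iff]

lemma ER_eq_union : ER d R = (posEdgeTails d R).map posEdge ∪ (posEdgeTails d R).map negEdge := by
  ext e
  simp only [Finset.mem_union, Finset.mem_map, mem_posEdgeTails, Sigma.exists]
  constructor
  · intro he
    obtain ⟨i, h | h⟩ := adj_of_mem_ER he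
    · refine Or.inl ⟨i, e.1, ?_, Prod.ext rfl h.symm⟩
      show (e.1, e.1 + unitVec i) ∈ ER d R
      rwa [← h]
    · refine Or.inr ⟨i, e.2, ?_, Prod.ext h.symm rfl⟩
      show (e.2, e.2 + unitVec i) ∈ ER d R
      rw [← h]
      exact swap_mem_ER he
  · rintro (⟨i, x, hx, rfl⟩ | ⟨i, x, hx, rfl⟩)
    · exact hx
    · exact swap_mem_ER hx

theorem sum_ER_eq_two_nsmul {M : Type*} [AddCommMonoid M] (F : Zd d × Zd d → M)
    (hF : ∀ x i, F (x + unitVec i, x) = F (x, x + unitVec i)) :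
    ∑ e ∈ ER d R, F e = 2 • ∑ i,
      ∑ x ∈ boxD d R ∪ (boxD d R).map (Equiv.subRight (unitVec i)).toEmbedding,
        F (x, x + unitVec i) := by
  rw [ER_eq_union, Finset.sum_union (disjoint_map_posEdge_map_negEdge _), Finset.sum_map,
    Finset.sum_map, two_nsmul, posEdgeTails, Finset.sum_sigma, Finset.sum_sigma]
  simp [hF]

def outwardNormal (R : ℕ) (y : Zd d) : Zd d :=
  fun k => if y k = R then 1 else if y k = -(R : ℤ) then -1 else 0

lemma eq_sub_outwardNormal {x y : Zd d} (hx : x ∈ boxD d R) (hy : y ∉ boxD d R) (hxy : Adj x y) :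
    x = y - outwardNormal R y := by
  rw [mem_boxD] at hx hy
  push Not at hy
  obtain ⟨m, hm⟩ := hy
  funext k
  have hxk := hx k
  have hxm := hx m
  obtain ⟨i, rfl | rfl⟩ := hxy <;>
    simp only [outwardNormal, Pi.add_apply, Pi.sub_apply, unitVec_apply] at * <;>
    split_ifs at * <;> subst_vars <;> omega

lemma mem_boxC_of_adj {x y : Zd d} (hx : x ∈ boxD d R) (hxy : Adj x y) : y ∈ boxC d R := by
  rw [mem_boxD] at hx
  rw [mem_boxC]
  intro k
  have hxk := hx k
  obtain ⟨i, rfl | rfl⟩ := hxy <;>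
    simp only [Pi.add_apply, unitVec_apply] at * <;>
    split_ifs at * <;> subst_vars <;> omega

def facePlus (d R : ℕ) (i : Fin d) : Finset (Zd d) :=
  (boxD d R).map (Equiv.addRight (unitVec i)).toEmbedding \ boxD d R

def faceMinus (d R : ℕ) (i : Fin d) : Finset (Zd d) :=
  (boxD d R).map (Equiv.subRight (unitVec i)).toEmbedding \ boxD d R

@[simp] lemma mem_facePlus {y : Zd d} {i : Fin d} :
    y ∈ facePlus d R i ↔ y - unitVec i ∈ boxD d R ∧ y ∉ boxD d R := by
  simp [facePlus, Finset.mem_map_equiv, sub_eq_add_neg]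

@[simp] lemma mem_faceMinus {y : Zd d} {i : Fin d} :
    y ∈ faceMinus d R i ↔ y + unitVec i ∈ boxD d R ∧ y ∉ boxD d R := by
  simp [faceMinus, Finset.mem_map_equiv]

lemma outwardNormal_of_mem_facePlus {y : Zd d} {i : Fin d} (hy : y ∈ facePlus d R i) :
    outwardNormal R y = unitVec i := by
  rw [mem_facePlus] at hy
  exact (sub_right_injective
    (eq_sub_outwardNormal hy.1 hy.2 ⟨i, Or.inl (sub_add_cancel y _).symm⟩)).symm

lemma outwardNormal_of_mem_faceMinus {y : Zd d} {i : Fin d} (hy : y ∈ faceMinus d R i) :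
    outwardNormal R y = -unitVec i := by
  rw [mem_faceMinus] at hy
  have := eq_sub_outwardNormal hy.1 hy.2 ⟨i, Or.inr rfl⟩
  rw [sub_eq_add_neg] at this
  rw [add_left_cancel this, neg_neg]

lemma tbdry_eq_biUnion :
    tbdry d R = Finset.univ.biUnion fun i => facePlus d R i ∪ faceMinus d R i := by
  ext y
  simp only [tbdry, bdry, Finset.mem_filter, Finset.mem_sdiff, Finset.mem_biUnion, Finset.mem_univ,
    true_and, Finset.mem_union, mem_facePlus, mem_faceMinus]
  constructor
  · rintro ⟨⟨-, hy⟩, x, hx, i, rfl | rfl⟩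
    · exact ⟨i, Or.inr ⟨hx, hy⟩⟩
    · exact ⟨i, Or.inl ⟨by simpa using hx, hy⟩⟩
  · rintro ⟨i, ⟨hyi, hy⟩ | ⟨hyi, hy⟩⟩
    · have hadj : Adj y (y - unitVec i) := ⟨i, Or.inr (sub_add_cancel y _).symm⟩
      exact ⟨⟨mem_boxC_of_adj hyi hadj.symm, hy⟩, _, hyi, hadj⟩
    · exact ⟨⟨mem_boxC_of_adj hyi (adj_add_unitVec y i).symm, hy⟩, _, hyi, adj_add_unitVec y i⟩

lemma disjoint_facePlus_faceMinus (i : Fin d) : Disjoint (facePlus d R i) (faceMinus d R i) :=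
  Finset.disjoint_left.2 fun _ hp hm => unitVec_ne_neg i i <|
    (outwardNormal_of_mem_facePlus hp).symm.trans (outwardNormal_of_mem_faceMinus hm)

lemma pairwiseDisjoint_faces :
    ((Finset.univ : Finset (Fin d)) : Set (Fin d)).PairwiseDisjoint
      fun i => facePlus d R i ∪ faceMinus d R i := by
  intro i _ j _ hij
  refine Finset.disjoint_left.2 fun y hi hj => ?_
  rcases Finset.mem_union.1 hi with hi | hi <;> rcases Finset.mem_union.1 hj with hj | hj
  · exact hij (unitVec_injective <| (outwardNormal_of_mem_facePlus hi).symm.trans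
      (outwardNormal_of_mem_facePlus hj))
  · exact unitVec_ne_neg i j <| (outwardNormal_of_mem_facePlus hi).symm.trans
      (outwardNormal_of_mem_faceMinus hj)
  · exact unitVec_ne_neg j i <| (outwardNormal_of_mem_facePlus hj).symm.trans
      (outwardNormal_of_mem_faceMinus hi)
  · exact hij (unitVec_injective <| neg_injective <| (outwardNormal_of_mem_faceMinus hi).symm.trans
      (outwardNormal_of_mem_faceMinus hj))

lemma sum_tbdry_eq_sum_faces {M : Type*} [AddCommMonoid M] (φ : Zd d → M) :
    ∑ y ∈ tbdry d R, φ y = ∑ i, (∑ y ∈ facePlus d R i, φ y + ∑ y ∈ faceMinus d R i, φ y) := by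
  rw [tbdry_eq_biUnion, Finset.sum_biUnion pairwiseDisjoint_faces]
  exact Finset.sum_congr rfl fun i _ => Finset.sum_union (disjoint_facePlus_faceMinus i)

lemma eq_of_mem_Enor {y : Zd d} {e : Zd d × Zd d} (hy : y ∈ tbdry d R) (he : e ∈ Enor d R)
    (hey : e.1 = y ∨ e.2 = y) : e = (y - outwardNormal R y, y) := by
  simp only [Enor, bdry, Finset.mem_filter, Finset.mem_product, Finset.mem_sdiff] at he
  have hyD : y ∉ boxD d R := (Finset.mem_sdiff.1 (Finset.mem_filter.1 hy).1).2
  obtain ⟨⟨he1, -, he2⟩, hadj⟩ := he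
  obtain rfl : e.2 = y := hey.resolve_left fun h => hyD (h ▸ he1)
  exact Prod.ext (eq_sub_outwardNormal he1 he2 hadj) rfl

lemma sum_divStar_mul (F : Zd d → Fin d → ℝ) (w : Zd d → ℝ) (D : Finset (Zd d)) :
    ∑ x ∈ D, divStar F x * w x = ∑ i, ∑ x ∈ D, (F (x - unitVec i) i - F x i) * w x := by
  simp only [divStar, Finset.sum_mul]
  exact Finset.sum_comm

lemma mem_boxD_of_mem_boxD_sub_one {x : Zd d} (hx : x ∈ boxD d (R - 1)) (i : Fin d) :
    x ∈ boxD d R ∧ x + unitVec i ∈ boxD d R := by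
  simp only [mem_boxD, Pi.add_apply, unitVec_apply] at hx ⊢
  exact ⟨fun j => by have := hx j; omega, fun j => by have := hx j; split_ifs <;> omega⟩

theorem sum_divStar_mul_eq_sum_dGrad_mul {f : Zd d → Fin d → ℝ} (w : Zd d → ℝ)
    (hf0 : ∀ x : Zd d, x ∉ boxD d (R - 1) → f x = 0) :
    ∑ x ∈ boxD d R, divStar f x * w x = ∑ x ∈ boxD d R, ∑ i, dGrad i w x * f x i := by
  rw [sum_divStar_mul, Finset.sum_comm (s := boxD d R)]
  refine Finset.sum_congr rfl fun i _ => ?_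
  rw [sum_by_parts_translate_of_support _ _ (f · i) w fun x hx => ?_]
  · simp only [dGrad, mul_comm]
  · refine congrFun (hf0 x fun hxR => ?_) i
    have := mem_boxD_of_mem_boxD_sub_one hxR i
    tauto

theorem sum_tbdry_mul_eq {g : Zd d × Zd d → ℝ} {h : Zd d → Fin d → ℝ} (w : Zd d → ℝ)
    (hg : ∀ x y : Zd d, Adj x y → g (x, y) = - g (y, x))
    (hh : ∀ (x : Zd d) (i : Fin d), h x i = g (x, x + unitVec i))
    {nR : Zd d → Zd d × Zd d}
    (hnR : ∀ y ∈ tbdry d R, nR y ∈ Enor d R ∧ ((nR y).1 = y ∨ (nR y).2 = y)) :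
    ∑ y ∈ tbdry d R, g (nR y) * w y =
      ∑ i, (∑ y ∈ facePlus d R i, h (y - unitVec i) i * w y
        - ∑ y ∈ faceMinus d R i, h y i * w y) := by
  have hnormal : ∀ y ∈ tbdry d R, g (nR y) * w y = g (y - outwardNormal R y, y) * w y :=
    fun y hy => by rw [eq_of_mem_Enor hy (hnR y hy).1 (hnR y hy).2]
  rw [Finset.sum_congr rfl hnormal, sum_tbdry_eq_sum_faces]
  refine Finset.sum_congr rfl fun i _ => ?_
  rw [sub_eq_add_neg, ← Finset.sum_neg_distrib]
  congr 1 <;> refine Finset.sum_congr rfl fun y hy => ?_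
  · rw [outwardNormal_of_mem_facePlus hy, hh, sub_add_cancel]
  · rw [outwardNormal_of_mem_faceMinus hy, sub_neg_eq_add, hh,
      hg _ _ (adj_add_unitVec y i).symm, neg_mul]

end Lattice

theorem summation_identity_general
    (d : ℕ) (R : ℕ)
    (g : Zd d × Zd d → ℝ) (w : Zd d → ℝ) (h f : Zd d → Fin d → ℝ)
    (hg : ∀ x y : Zd d, Adj x y → g (x, y) = - g (y, x))
    (hh : ∀ (x : Zd d) (i : Fin d), h x i = g (x, x + unitVec i))
    (hhf : ∀ x ∈ boxD d R, divStar h x = divStar f x)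
    (hf0 : ∀ x : Zd d, x ∉ boxD d (R - 1) → f x = 0)
    (nR : Zd d → Zd d × Zd d)
    (hnR : ∀ y ∈ tbdry d R, nR y ∈ Enor d R ∧ ((nR y).1 = y ∨ (nR y).2 = y)) :
    ∑ e ∈ ER d R, g e * (w e.2 - w e.1)
      = 2 * (∑ y ∈ tbdry d R, g (nR y) * w y)
        + 2 * (∑ x ∈ boxD d R, ∑ i : Fin d, dGrad i w x * f x i) := by
  have hswap : ∀ x i, g (x + unitVec i, x) * (w x - w (x + unitVec i))
      = g (x, x + unitVec i) * (w (x + unitVec i) - w x) := fun x i => by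
    rw [hg _ _ (adj_add_unitVec x i).symm]; ring
  calc ∑ e ∈ ER d R, g e * (w e.2 - w e.1)
      = 2 * ∑ i, ∑ x ∈ boxD d R ∪ (boxD d R).map (Equiv.subRight (unitVec i)).toEmbedding,
          h x i * (w (x + unitVec i) - w x) := by
        rw [sum_ER_eq_two_nsmul (fun e => g e * (w e.2 - w e.1)) hswap, nsmul_eq_mul]
        simp only [hh, Nat.cast_ofNat]
    _ = 2 * ∑ i, (∑ x ∈ boxD d R, (h (x - unitVec i) i - h x i) * w x
          + (∑ y ∈ facePlus d R i, h (y - unitVec i) i * w y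
            - ∑ y ∈ faceMinus d R i, h y i * w y)) := by
        refine congrArg (2 * ·) (Finset.sum_congr rfl fun i _ => ?_)
        rw [sum_by_parts_translate _ _ (h · i), add_sub_assoc, facePlus, faceMinus]
    _ = 2 * (∑ y ∈ tbdry d R, g (nR y) * w y)
          + 2 * (∑ x ∈ boxD d R, ∑ i : Fin d, dGrad i w x * f x i) := by
        rw [Finset.sum_add_distrib, ← sum_divStar_mul, ← sum_tbdry_mul_eq w hg hh hnR,
          Finset.sum_congr rfl fun x hx => by rw [hhf x hx], sum_divStar_mul_eq_sum_dGrad_mul w hf0]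
        ring

/-- summation identity, Lemma `b66`: for an antisymmetric edge function `g`
with `h_i(x) = g(x, x+e_i)`, `∇^*·h = ∇^*·f` on `D_R` and `f = 0` outside `D_{R-1}`,
`∑_{(x,y)∈E_R} g(x,y) ∇̄_{xy} w = 2 ∑_{y∈∂̃D_R} g(n_R(y)) w(y) + 2 ∑_{x∈D_R} ∇w(x)·f(x)`. -/
theorem summation_identity
    (d : ℕ) (hd : 2 ≤ d) (R : ℕ)
    (g : Zd d × Zd d → ℝ) (w : Zd d → ℝ) (h f : Zd d → Fin d → ℝ)
    (hg : ∀ x y : Zd d, Adj x y → g (x, y) = - g (y, x))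
    (hh : ∀ (x : Zd d) (i : Fin d), h x i = g (x, x + unitVec i))
    (hhf : ∀ x ∈ boxD d R, divStar h x = divStar f x)
    (hf0 : ∀ x : Zd d, x ∉ boxD d (R - 1) → f x = 0)
    (nR : Zd d → Zd d × Zd d)
    (hnR : ∀ y ∈ tbdry d R, nR y ∈ Enor d R ∧ ((nR y).1 = y ∨ (nR y).2 = y)) :
    ∑ e ∈ ER d R, g e * (w e.2 - w e.1)
      = 2 * (∑ y ∈ tbdry d R, g (nR y) * w y)
        + 2 * (∑ x ∈ boxD d R, ∑ i : Fin d, dGrad i w x * f x i) :=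
  summation_identity_general d R g w h f hg hh hhf hf0 nR hnR
end
end

section
/- Let d ≥ 2, R ∈ ℕ with ∂̃D_R nonempty, ω ∈ Ω, and let a_h ∈ ℝ^{d×d} be a diagonal matrix with positive diagonal entries, with associated constant environment ω_h ∈ Ω given by ω_h({x, x+e_i}) = (a_h)_{ii}. Let S, Z : ℝ^{∂D_R} → ℝ^{∂D_R} be linear operators such that Zu = 0 whenever u vanishes on ∂̃D_R and (Zg)(x) = g(x) for every g : ∂D_R → ℝ and every x ∈ ∂̃D_R, and define S^* : ℝ^{∂̃D_R} → ℝ^{∂̃D_R} by (S^*h)(x) = Σ_{y∈∂̃D_R} h(y)(S Z 1_{{x}})(y). Let u : D̄_R → ℝ and suppose N u : D̄_R → ℝ satisfies: for all x ∈ ∂̃D_R, (ω_h ∇̄(Nu))_{n_R(x)} = [S^*((ω∇̄u)_{n_R})](x) − |∂̃D_R|^{−1} Σ_{y∈∂̃D_R} [S^*((ω∇̄u)_{n_R})](y); (∇^*·a_h∇(Nu))(x) = 0 for all x ∈ D_R; and Σ_{y∈∂̃D_R} (u(y) − (Nu)(y)) = 0. Define the boundary term B(ω,R,u,v) = |∂̃D_R|^{−1}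 Σ_{x∈∂̃D_R} (u(x) − v(x)) (ω∇̄u − ω_h∇̄v)_{n_R(x)}. Then B(ω,R,u,Nu) = |∂̃D_R|^{−1} Σ_{x∈∂̃D_R} [ (Z((u−Nu)|_{∂D_R}))(x) − (S Z((u−Nu)|_{∂D_R}))(x) ] (ω∇̄u)_{n_R(x)}. -/
open MeasureTheory Filter
open scoped ENNReal Classical

noncomputable section

/-- The dual smoothing operator `S^*` built from `S` and the modifying operator `Z`. -/
def Sstar (d R : ℕ) (S Z : (Zd d → ℝ) →ₗ[ℝ] (Zd d → ℝ)) (h : Zd d → ℝ) (x : Zd d) : ℝ :=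
  ∑ y ∈ tbdry d R, h y * (S (Z (fun z => if z = x then (1 : ℝ) else 0))) y

/-- The flux `(ω ∇̄ u)_e` of `u` across an oriented edge `e`. -/
def flux {d : ℕ} (ω : Env d) (u : Zd d → ℝ) (e : Zd d × Zd d) : ℝ :=
  econd ω e.1 e.2 * (u e.2 - u e.1)

/-- The boundary term
`B(ω,R,u,v) = |∂̃D_R|⁻¹ ∑_{x∈∂̃D_R} (u(x)-v(x)) (ω∇̄u - ω_h∇̄v)_{n_R(x)}`. -/
def Bterm (d R : ℕ) (ω ωh : Env d) (nR : Zd d → Zd d × Zd d) (u v : Zd d → ℝ) : ℝ :=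
  (1 / ((tbdry d R).card : ℝ)) *
    ∑ x ∈ tbdry d R, (u x - v x) * (flux ω u (nR x) - flux ωh v (nR x))

/-- Lemma `y03`, boundary term for the Neumann extension. -/
theorem neumann_boundary_term
    (d : ℕ) (hd : 2 ≤ d) (R : ℕ) (hne : (tbdry d R).Nonempty)
    (ω ωh : Env d) (ah : Fin d → ℝ) (hah : ∀ i, 0 < ah i)
    (hωh : ∀ (x : Zd d) (i : Fin d), cval ωh x i = ah i)
    (S Z : (Zd d → ℝ) →ₗ[ℝ] (Zd d → ℝ))
    (hZ0 : ∀ u : Zd d → ℝ, (∀ x ∈ tbdry d R, u x = 0) → Z u = 0)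
    (hZid : ∀ (g : Zd d → ℝ), ∀ x ∈ tbdry d R, Z g x = g x)
    (nR : Zd d → Zd d × Zd d)
    (hnR : ∀ y ∈ tbdry d R, nR y ∈ Enor d R ∧ ((nR y).1 = y ∨ (nR y).2 = y))
    (u Nu : Zd d → ℝ)
    -- Neumann boundary condition for `Nu` via the dual smoothing operator:
    (hNeu : ∀ x ∈ tbdry d R,
      flux ωh Nu (nR x)
        = Sstar d R S Z (fun y => flux ω u (nR y)) x
          - (1 / ((tbdry d R).card : ℝ)) *
              ∑ y ∈ tbdry d R, Sstar d R S Z (fun y' => flux ω u (nR y')) y)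
    -- `Nu` is `a_h`-harmonic in `D_R`:
    (hharm : ∀ x ∈ boxD d R, divStar (fun y j => ah j * dGrad j Nu y) x = 0)
    -- normalization `∑_{y∈∂̃D_R} (u(y) - Nu(y)) = 0`:
    (hmean : ∑ y ∈ tbdry d R, (u y - Nu y) = 0) :
    Bterm d R ω ωh nR u Nu
      = (1 / ((tbdry d R).card : ℝ)) *
          ∑ x ∈ tbdry d R,
            ((Z (fun z => u z - Nu z)) x - (S (Z (fun z => u z - Nu z))) x)
              * flux ω u (nR x) := by
  classical
  set T := tbdry d R with hTdef
  set w : Zd d → ℝ := fun z => u z - Nu z with hwdef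
  set F : Zd d → ℝ := fun y => flux ω u (nR y) with hFdef
  set c : ℝ := (1 / (T.card : ℝ)) * ∑ y ∈ T, Sstar d R S Z F y with hcdef
  have hmean' : ∑ y ∈ T, w y = 0 := hmean
  have hZw : Z w = Z (∑ x ∈ T, w x • (fun z => if z = x then (1:ℝ) else 0)) := by
    have h0 : Z (w - ∑ x ∈ T, w x • (fun z => if z = x then (1:ℝ) else 0)) = 0 := by
      apply hZ0
      intro t ht
      have hs : (∑ x ∈ T, w x • (fun z => if z = x then (1:ℝ) else 0)) t = w t := by
        have h1 : (∑ x ∈ T, w x • (fun z => if z = x then (1:ℝ) else 0)) t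
            = ∑ x ∈ T, (if t = x then w x else 0) := by
          rw [Finset.sum_apply]
          exact Finset.sum_congr rfl fun x _ => by simp [smul_eq_mul, mul_ite]
        rw [h1, Finset.sum_ite_eq T t w, if_pos ht]
      simp [Pi.sub_apply, hs]
    have h1 : Z w - Z (∑ x ∈ T, w x • (fun z => if z = x then (1:ℝ) else 0)) = 0 := by
      rw [← map_sub]; exact h0
    exact sub_eq_zero.mp h1
  have hSZw : ∀ y : Zd d, S (Z w) y
      = ∑ x ∈ T, w x * S (Z (fun z => if z = x then (1:ℝ) else 0)) y := by
    intro y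
    rw [hZw, map_sum, map_sum, Finset.sum_apply]
    refine Finset.sum_congr rfl fun x _ => ?_
    rw [Z.map_smul, S.map_smul]
    simp [smul_eq_mul]
  have hswap : ∑ x ∈ T, w x * Sstar d R S Z F x = ∑ y ∈ T, S (Z w) y * F y := by
    unfold Sstar
    calc ∑ x ∈ T, w x * ∑ y ∈ T, F y * S (Z (fun z => if z = x then (1:ℝ) else 0)) y
        = ∑ x ∈ T, ∑ y ∈ T, w x * (F y * S (Z (fun z => if z = x then (1:ℝ) else 0)) y) := by
          simp [Finset.mul_sum]
      _ = ∑ y ∈ T, ∑ x ∈ T, w x * (F y * S (Z (fun z => if z = x then (1:ℝ) else 0)) y) :=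
          Finset.sum_comm
      _ = ∑ y ∈ T, S (Z w) y * F y := by
          refine Finset.sum_congr rfl fun y _ => ?_
          rw [hSZw y, Finset.sum_mul]
          exact Finset.sum_congr rfl fun x _ => by ring
  have hL : ∑ x ∈ T, (u x - Nu x) * (flux ω u (nR x) - flux ωh Nu (nR x))
      = ∑ x ∈ T, w x * F x - ∑ y ∈ T, S (Z w) y * F y := by
    have hstep : ∀ x ∈ T, (u x - Nu x) * (flux ω u (nR x) - flux ωh Nu (nR x))
        = w x * F x - w x * Sstar d R S Z F x + c * w x := by
      intro x hx
      rw [hNeu x hx]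
      show w x * (F x - (Sstar d R S Z F x - c)) = _
      ring
    rw [Finset.sum_congr rfl hstep, Finset.sum_add_distrib, Finset.sum_sub_distrib,
      ← Finset.mul_sum, hmean', mul_zero, add_zero, hswap]
  have hR : ∑ x ∈ T, (Z w x - S (Z w) x) * F x
      = ∑ x ∈ T, w x * F x - ∑ y ∈ T, S (Z w) y * F y := by
    have hstep : ∀ x ∈ T, (Z w x - S (Z w) x) * F x = w x * F x - S (Z w) x * F x := by
      intro x hx
      rw [hZid w x hx]; ring
    rw [Finset.sum_congr rfl hstep, Finset.sum_sub_distrib]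
  unfold Bterm
  rw [← hTdef, hL, hR]

end
end
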